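/- arXiv:2212.06409 — 9 statements merged into one kernel-verified Lean document; each statement's English description precedes it below -/
import Mathlib

section
/- Let E be a real reflexive Banach space and let f : E → ℝ be uniformly Fréchet differentiable and bounded on bounded subsets of E. Then f is uniformly continuous on bounded subsets of E, and the gradient map ∇f : E → E* is uniformly continuous on bounded subsets of E from the strong topology of E to the strong topology of E*. -/
open Filter Topology Set Bornology Metric

/-!
Fix a bounded set `B`. At a single small scale `t ≤ 1` the difference quotient
`(f (x + t • y) - f x) / t` approximates `f' x y` uniformly for `x ∈ B`, `‖y‖ = 1`; since `f` is
bounded on the `1`-thickening of `B`, this bounds `f'` on `B` by `2M / t + 1`. With `f'` bounded,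
the uniform first-order expansion makes `f` Lipschitz at small distances on `B`, hence uniformly
continuous there. Finally `f' x y - f' z y` is, up to a uniform error, the difference of two
difference quotients at one fixed scale `t`, which is small for `x` close to `z` by the uniform
continuity of `f` on the thickening.
-/

theorem add_mem_cthickening {E : Type*} [SeminormedAddCommGroup E] {B : Set E} {r : ℝ} {x v : E}
    (hx : x ∈ B) (hv : ‖v‖ ≤ r) : x + v ∈ cthickening r B :=
  mem_cthickening_of_dist_le _ x r B hx (by rwa [dist_self_add_left])

theorem norm_smul_le_one_of_norm_eq_one {E : Type*} [SeminormedAddCommGroup E] [NormedSpace ℝ E]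
    {t : ℝ} {y : E} (ht0 : 0 ≤ t) (ht1 : t ≤ 1) (hy : ‖y‖ = 1) : ‖t • y‖ ≤ 1 := by
  rwa [norm_smul, hy, mul_one, Real.norm_of_nonneg ht0]

def HasUniformGradientOn {E : Type*} [NormedAddCommGroup E] [NormedSpace ℝ E]
    (f : E → ℝ) (f' : E → StrongDual ℝ E) (B : Set E) : Prop :=
  ∀ ε > (0 : ℝ), ∃ δ > (0 : ℝ), ∀ t : ℝ, 0 < t → t < δ → ∀ x ∈ B, ∀ y : E, ‖y‖ = 1 →
    |(f (x + t • y) - f x) / t - f' x y| < ε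

section

variable {E : Type*} [NormedAddCommGroup E] [NormedSpace ℝ E]
  {f : E → ℝ} {f' : E → StrongDual ℝ E} {B : Set E}

namespace HasUniformGradientOn

theorem exists_scale (h : HasUniformGradientOn f f' B) {ε : ℝ} (hε : 0 < ε) :
    ∃ t : ℝ, 0 < t ∧ t ≤ 1 ∧ ∀ x ∈ B, ∀ y : E, ‖y‖ = 1 →
      |(f (x + t • y) - f x) / t - f' x y| < ε := by
  obtain ⟨δ, hδ, hδ'⟩ := h ε hε
  exact ⟨min (δ / 2) 1, by positivity, min_le_right _ _,
    hδ' _ (by positivity) ((min_le_left _ _).trans_lt (half_lt_self hδ))⟩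

theorem isBounded_image {M : ℝ} (h : HasUniformGradientOn f f' B)
    (hM : ∀ x ∈ cthickening 1 B, |f x| ≤ M) : IsBounded (f' '' B) := by
  obtain ⟨t, ht0, ht1, ht⟩ := h.exists_scale one_pos
  refine isBounded_iff_forall_norm_le.2 ⟨2 * M / t + 1, forall_mem_image.2 fun x hx => ?_⟩
  have hM0 : 0 ≤ M := (abs_nonneg _).trans (hM x (self_subset_cthickening B hx))
  refine ContinuousLinearMap.opNorm_le_of_unit_norm (by positivity) fun y hy => ?_
  have hxy := hM _ (add_mem_cthickening hx (norm_smul_le_one_of_norm_eq_one ht0.le ht1 hy))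
  have hquot : |(f (x + t • y) - f x) / t| ≤ 2 * M / t := by
    rw [abs_div, abs_of_pos ht0]
    gcongr
    linarith [abs_sub (f (x + t • y)) (f x), hM x (self_subset_cthickening B hx)]
  rw [Real.norm_eq_abs]
  linarith [abs_sub_abs_le_abs_sub (f' x y) ((f (x + t • y) - f x) / t),
    abs_sub_comm (f' x y) ((f (x + t • y) - f x) / t), ht x hx y hy]

theorem exists_abs_sub_le_mul_dist {K : ℝ} (h : HasUniformGradientOn f f' B)
    (hK : ∀ x ∈ B, ‖f' x‖ ≤ K) :
    ∃ δ > 0, ∀ x ∈ B, ∀ z : E, dist z x < δ → |f z - f x| ≤ (K + 1) * dist z x := by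
  obtain ⟨δ, hδ, hδ'⟩ := h 1 one_pos
  refine ⟨δ, hδ, fun x hx z hzx => ?_⟩
  set s := dist z x
  rcases (dist_nonneg : 0 ≤ s).eq_or_lt with hs0 | hs0
  · obtain rfl : z = x := dist_eq_zero.1 hs0.symm
    simp [s]
  set y := s⁻¹ • (z - x)
  have hy : ‖y‖ = 1 := by
    rw [norm_smul, norm_inv, Real.norm_of_nonneg hs0.le, ← dist_eq_norm, inv_mul_cancel₀ hs0.ne']
  have hz : x + s • y = z := by
    rw [smul_smul, mul_inv_cancel₀ hs0.ne', one_smul, add_sub_cancel]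
  have hquot := hδ' s hs0 hzx x hx y hy
  rw [hz] at hquot
  have hgrad : |f' x y| ≤ K := by
    simpa [hy] using ((f' x).le_opNorm y).trans (mul_le_mul_of_nonneg_right (hK x hx) (norm_nonneg y))
  have hlt : |(f z - f x) / s| < K + 1 := by
    linarith [abs_sub_abs_le_abs_sub ((f z - f x) / s) (f' x y)]
  rw [abs_div, abs_of_pos hs0, div_lt_iff₀ hs0] at hlt
  exact hlt.le

theorem uniformContinuousOn (h : HasUniformGradientOn f f' B) (hb : IsBounded (f' '' B)) :
    UniformContinuousOn f B := by
  obtain ⟨K, hK0, hK⟩ := hb.exists_pos_norm_le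
  obtain ⟨δ, hδ, hlip⟩ := h.exists_abs_sub_le_mul_dist (forall_mem_image.1 hK)
  refine Metric.uniformContinuousOn_iff.2 fun ε hε => ⟨min δ (ε / (K + 1)), by positivity, ?_⟩
  intro x hx z hz hxz
  have hfxz := hlip z hz x (hxz.trans_le (min_le_left _ _))
  have hε' : (K + 1) * dist x z < ε := by
    rw [← lt_div_iff₀' (by positivity)]
    exact hxz.trans_le (min_le_right _ _)
  rw [Real.dist_eq]
  linarith

theorem uniformContinuousOn_grad (h : HasUniformGradientOn f f' B)
    (hf : UniformContinuousOn f (cthickening 1 B)) : UniformContinuousOn f' B := by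
  refine Metric.uniformContinuousOn_iff_le.2 fun ε hε => ?_
  obtain ⟨t, ht0, ht1, ht⟩ := h.exists_scale (ε := ε / 3) (by positivity)
  obtain ⟨η, hη, hfη⟩ := Metric.uniformContinuousOn_iff_le.1 hf (ε * t / 6) (by positivity)
  refine ⟨η, hη, fun x hx z hz hxz => ?_⟩
  rw [dist_eq_norm]
  refine ContinuousLinearMap.opNorm_le_of_unit_norm hε.le fun y hy => ?_
  have hty := norm_smul_le_one_of_norm_eq_one ht0.le ht1 hy
  have hshift : |f (x + t • y) - f (z + t • y)| ≤ ε * t / 6 := by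
    simpa [Real.dist_eq] using hfη _ (add_mem_cthickening hx hty) _ (add_mem_cthickening hz hty)
      (by rwa [dist_add_right])
  have hbase : |f x - f z| ≤ ε * t / 6 := by
    simpa [Real.dist_eq] using hfη x (self_subset_cthickening B hx) z
      (self_subset_cthickening B hz) hxz
  have hquot : |(f (x + t • y) - f x) / t - (f (z + t • y) - f z) / t| ≤ ε / 3 := by
    rw [div_sub_div_same, abs_div, abs_of_pos ht0, div_le_iff₀ ht0]
    calc |f (x + t • y) - f x - (f (z + t • y) - f z)|
        = |(f (x + t • y) - f (z + t • y)) - (f x - f z)| := by ring_nf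
      _ ≤ |f (x + t • y) - f (z + t • y)| + |f x - f z| := abs_sub _ _
      _ ≤ ε / 3 * t := by linarith
  have hx' := abs_lt.1 (ht x hx y hy)
  have hz' := abs_lt.1 (ht z hz y hy)
  have hq' := abs_le.1 hquot
  rw [sub_apply, Real.norm_eq_abs, abs_le]
  constructor <;> linarith

end HasUniformGradientOn

end

theorem stmt0_general {E : Type*} [NormedAddCommGroup E] [NormedSpace ℝ E]
    (f : E → ℝ) (f' : E → StrongDual ℝ E)
    (hunif : ∀ B : Set E, IsBounded B → ∀ ε > (0 : ℝ), ∃ δ > (0 : ℝ),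
      ∀ t : ℝ, 0 < t → t < δ → ∀ x ∈ B, ∀ y : E, ‖y‖ = 1 →
        |(f (x + t • y) - f x) / t - f' x y| < ε)
    (hbdd : ∀ B : Set E, IsBounded B → ∃ M : ℝ, ∀ x ∈ B, |f x| ≤ M) :
    (∀ B : Set E, IsBounded B → UniformContinuousOn f B) ∧
    (∀ B : Set E, IsBounded B → UniformContinuousOn f' B) := by
  have hgrad : ∀ B : Set E, IsBounded B → HasUniformGradientOn f f' B := hunif
  have hf : ∀ B : Set E, IsBounded B → UniformContinuousOn f B := fun B hB => by
    obtain ⟨M, hM⟩ := hbdd _ hB.cthickening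
    exact (hgrad B hB).uniformContinuousOn ((hgrad B hB).isBounded_image hM)
  exact ⟨hf, fun B hB => (hgrad B hB).uniformContinuousOn_grad (hf _ hB.cthickening)⟩

/-- Let `E` be a real reflexive Banach space and `f : E → ℝ` be uniformly
Fréchet differentiable and bounded on bounded subsets of `E` (with Gâteaux/Fréchet gradient
`f' : E → E*`).  Then `f` is uniformly continuous on bounded subsets of `E` and
`∇f = f'` is uniformly continuous on bounded subsets of `E` from the strong topology of `E`
to the strong topology of `E*`. -/
theorem stmt0 {E : Type*} [NormedAddCommGroup E] [NormedSpace ℝ E] [CompleteSpace E]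
    (hrefl : Function.Surjective (NormedSpace.inclusionInDoubleDual ℝ E))
    (f : E → ℝ) (f' : E → StrongDual ℝ E)
    (hgrad : ∀ x y : E,
      Tendsto (fun t : ℝ => (f (x + t • y) - f x) / t) (𝓝[>] (0 : ℝ)) (𝓝 (f' x y)))
    (hunif : ∀ B : Set E, IsBounded B → ∀ ε > (0 : ℝ), ∃ δ > (0 : ℝ),
      ∀ t : ℝ, 0 < t → t < δ → ∀ x ∈ B, ∀ y : E, ‖y‖ = 1 →
        |(f (x + t • y) - f x) / t - f' x y| < ε)
    (hbdd : ∀ B : Set E, IsBounded B → ∃ M : ℝ, ∀ x ∈ B, |f x| ≤ M) :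
    (∀ B : Set E, IsBounded B → UniformContinuousOn f B) ∧
    (∀ B : Set E, IsBounded B → UniformContinuousOn f' B) :=
  stmt0_general f f' hunif hbdd
end

section
/- Let E be a real reflexive Banach space, let f : E → (−∞,+∞] be a proper, lower semicontinuous convex function which is Gâteaux differentiable on int dom f, and let x ∈ int dom f. Then the following are equivalent: (i) f is totally convex at x; (ii) for every sequence {y_n} ⊆ dom f, if D_f(y_n, x) → 0 then ‖y_n − x‖ → 0. -/
/-! Convexity makes `f' x` a subgradient at `x`, so `D_f(·, x) ≥ 0`, and it makes `D_f(·, x)`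
nondecreasing along every ray from `x`. Hence `v_f(x, t) ≤ D_f(y, x)` whenever `t ≤ ‖y − x‖`,
which gives (i) ⇒ (ii); conversely, if `v_f(x, t) = 0` for some `t > 0`, points on the sphere of
radius `t` with Bregman distances tending to `0` violate (ii). -/

open Filter Topology Set Bornology

/-- The Bregman distance `D_f(y,x) =f(y) − f(x) − ⟨∇f(x), y − x⟩` associated with an
extended-real-valued function `f` and a gradient map `f'`, with values in `EReal`. -/
noncomputable def BregmanDistE {E : Type*} [NormedAddCommGroup E] [NormedSpace ℝ E]
    (f : E → EReal) (f' : E → StrongDual ℝ E) (y x : E) : EReal :=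
  f y - f x - ((f' x (y - x) : ℝ) : EReal)

section Bregman

variable {E : Type*} [NormedAddCommGroup E] [NormedSpace ℝ E]

def ConvexEReal (f : E → EReal) : Prop :=
  ∀ x y : E, ∀ a b : ℝ, 0 ≤ a → 0 ≤ b → a + b = 1 →
    f (a • x + b • y) ≤ (a : EReal) * f x + (b : EReal) * f y

noncomputable def totalConvexityModulus (f : E → EReal) (f' : E → StrongDual ℝ E) (x : E)
    (t : ℝ) : EReal :=
  ⨅ (y : E) (_ : f y ≠ ⊤ ∧ ‖y - x‖ = t), BregmanDistE f f' y x

variable {f : E → EReal} {f' : E → StrongDual ℝ E} {x y : E}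

namespace ConvexEReal

theorem apply_add_smul_sub_le (hf : ConvexEReal f) (hbot : ∀ z, f z ≠ ⊥) (hx : f x ≠ ⊤)
    (hy : f y ≠ ⊤) {c : ℝ} (hc0 : 0 ≤ c) (hc1 : c ≤ 1) :
    f (x + c • (y - x)) ≤ (((1 - c) * (f x).toReal + c * (f y).toReal : ℝ) : EReal) := by
  have h := hf x y (1 - c) c (by linarith) hc0 (by ring)
  rwa [← EReal.coe_toReal hx (hbot x), ← EReal.coe_toReal hy (hbot y), ← EReal.coe_mul,
    ← EReal.coe_mul, ← EReal.coe_add, show (1 - c) • x + c • y = x + c • (y - x) by module] at h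

theorem apply_add_smul_sub_ne_top (hf : ConvexEReal f) (hbot : ∀ z, f z ≠ ⊥) (hx : f x ≠ ⊤)
    (hy : f y ≠ ⊤) {c : ℝ} (hc0 : 0 ≤ c) (hc1 : c ≤ 1) : f (x + c • (y - x)) ≠ ⊤ :=
  ne_top_of_le_ne_top (EReal.coe_ne_top _) (hf.apply_add_smul_sub_le hbot hx hy hc0 hc1)

theorem toReal_apply_add_smul_sub_le (hf : ConvexEReal f) (hbot : ∀ z, f z ≠ ⊥) (hx : f x ≠ ⊤)
    (hy : f y ≠ ⊤) {c : ℝ} (hc0 : 0 ≤ c) (hc1 : c ≤ 1) :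
    (f (x + c • (y - x))).toReal ≤ (1 - c) * (f x).toReal + c * (f y).toReal := by
  simpa only [EReal.toReal_coe] using
    EReal.toReal_le_toReal (hf.apply_add_smul_sub_le hbot hx hy hc0 hc1) (hbot _)
      (EReal.coe_ne_top _)

theorem le_sub_of_tendsto_slope (hf : ConvexEReal f) (hbot : ∀ z, f z ≠ ⊥) (hx : f x ≠ ⊤)
    (hy : f y ≠ ⊤) {d : ℝ}
    (hd : Tendsto (fun t : ℝ => ((f (x + t • (y - x))).toReal - (f x).toReal) / t)
      (𝓝[>] 0) (𝓝 d)) :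
    d ≤ (f y).toReal - (f x).toReal := by
  refine le_of_tendsto hd ?_
  filter_upwards [Ioc_mem_nhdsGT_of_mem (left_mem_Ico.2 one_pos)] with t ⟨ht0, ht1⟩
  rw [div_le_iff₀ ht0]
  linarith [hf.toReal_apply_add_smul_sub_le hbot hx hy ht0.le ht1]

end ConvexEReal

theorem bregmanDistE_eq_coe (hbot : ∀ z, f z ≠ ⊥) (hx : f x ≠ ⊤) (hy : f y ≠ ⊤) :
    BregmanDistE f f' y x = (((f y).toReal - (f x).toReal - f' x (y - x) : ℝ) : EReal) := by
  rw [BregmanDistE, ← EReal.coe_toReal hx (hbot x), ← EReal.coe_toReal hy (hbot y)]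
  simp only [EReal.toReal_coe, EReal.coe_sub]

theorem bregmanDistE_nonneg (hbot : ∀ z, f z ≠ ⊥) (hx : f x ≠ ⊤)
    (hsub : ∀ y, f y ≠ ⊤ → f' x (y - x) ≤ (f y).toReal - (f x).toReal) (hy : f y ≠ ⊤) :
    0 ≤ BregmanDistE f f' y x := by
  rw [bregmanDistE_eq_coe hbot hx hy, EReal.coe_nonneg]
  linarith [hsub y hy]

theorem bregmanDistE_add_smul_sub_le (hf : ConvexEReal f) (hbot : ∀ z, f z ≠ ⊥) (hx : f x ≠ ⊤)
    (hsub : ∀ y, f y ≠ ⊤ → f' x (y - x) ≤ (f y).toReal - (f x).toReal) (hy : f y ≠ ⊤)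
    {c : ℝ} (hc0 : 0 ≤ c) (hc1 : c ≤ 1) :
    BregmanDistE f f' (x + c • (y - x)) x ≤ BregmanDistE f f' y x := by
  rw [bregmanDistE_eq_coe hbot hx (hf.apply_add_smul_sub_ne_top hbot hx hy hc0 hc1),
    bregmanDistE_eq_coe hbot hx hy, EReal.coe_le_coe_iff, add_sub_cancel_left, map_smul,
    smul_eq_mul]
  -- the left side is at most `c` times the right side, which is nonnegative
  nlinarith [hf.toReal_apply_add_smul_sub_le hbot hx hy hc0 hc1, hsub y hy]

theorem totalConvexityModulus_le (hf : ConvexEReal f) (hbot : ∀ z, f z ≠ ⊥) (hx : f x ≠ ⊤)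
    (hsub : ∀ y, f y ≠ ⊤ → f' x (y - x) ≤ (f y).toReal - (f x).toReal) (hy : f y ≠ ⊤)
    {t : ℝ} (ht : 0 < t) (hty : t ≤ ‖y - x‖) :
    totalConvexityModulus f f' x t ≤ BregmanDistE f f' y x := by
  have hyx : 0 < ‖y - x‖ := ht.trans_le hty
  set c := t / ‖y - x‖
  have hc0 : 0 ≤ c := by positivity
  have hc1 : c ≤ 1 := (div_le_one hyx).2 hty
  have hnorm : ‖x + c • (y - x) - x‖ = t := by
    rw [add_sub_cancel_left, norm_smul, Real.norm_of_nonneg hc0, div_mul_cancel₀ _ hyx.ne']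
  calc totalConvexityModulus f f' x t
      ≤ BregmanDistE f f' (x + c • (y - x)) x :=
        iInf₂_le _ ⟨hf.apply_add_smul_sub_ne_top hbot hx hy hc0 hc1, hnorm⟩
    _ ≤ BregmanDistE f f' y x := bregmanDistE_add_smul_sub_le hf hbot hx hsub hy hc0 hc1

theorem exists_seq_tendsto_bregmanDistE_of_totalConvexityModulus_le_zero
    (hbot : ∀ z, f z ≠ ⊥) (hx : f x ≠ ⊤)
    (hsub : ∀ y, f y ≠ ⊤ → f' x (y - x) ≤ (f y).toReal - (f x).toReal) {t : ℝ}
    (h : totalConvexityModulus f f' x t ≤ 0) :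
    ∃ y : ℕ → E, (∀ n, f (y n) ≠ ⊤ ∧ ‖y n - x‖ = t) ∧
      Tendsto (fun n => BregmanDistE f f' (y n) x) atTop (𝓝 0) := by
  have hex : ∀ n : ℕ, ∃ z, (f z ≠ ⊤ ∧ ‖z - x‖ = t) ∧
      BregmanDistE f f' z x < ((1 / (n + 1) : ℝ) : EReal) := fun n => by
    have hlt := h.trans_lt (EReal.coe_pos.2 (Nat.one_div_pos_of_nat (n := n)))
    simpa only [totalConvexityModulus, iInf_lt_iff, exists_prop] using hlt
  choose y hy hlt using hex
  refine ⟨y, hy, tendsto_of_tendsto_of_tendsto_of_le_of_le tendsto_const_nhds ?_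
    (fun n => bregmanDistE_nonneg hbot hx hsub (hy n).1) (fun n => (hlt n).le)⟩
  rw [← EReal.coe_zero]
  exact EReal.tendsto_coe.2 tendsto_one_div_add_atTop_nhds_zero_nat

end Bregman

theorem stmt3_general {E : Type*} [NormedAddCommGroup E] [NormedSpace ℝ E]
    (f : E → EReal)
    (hnebot : ∀ x : E, f x ≠ ⊥)
    (hconv : ∀ x y : E, ∀ a b : ℝ, 0 ≤ a → 0 ≤ b → a + b = 1 →
      f (a • x + b • y) ≤ (a : EReal) * f x + (b : EReal) * f y)
    (f' : E → StrongDual ℝ E)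
    (hgrad : ∀ z ∈ interior {w : E | f w ≠ ⊤}, ∀ y : E,
      Tendsto (fun t : ℝ => ((f (z + t • y)).toReal - (f z).toReal) / t)
        (𝓝[>] (0 : ℝ)) (𝓝 (f' z y)))
    (x : E) (hx : x ∈ interior {w : E | f w ≠ ⊤}) :
    (∀ t : ℝ, 0 < t →
      (0 : EReal) < ⨅ (y : E) (_ : f y ≠ ⊤ ∧ ‖y - x‖ = t), BregmanDistE f f' y x)
    ↔
    (∀ y : ℕ → E, (∀ n, f (y n) ≠ ⊤) →
      Tendsto (fun n => BregmanDistE f f' (y n) x) atTop (𝓝 (0 : EReal)) →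
      Tendsto (fun n => ‖y n - x‖) atTop (𝓝 (0 : ℝ))) := by
  have hconv : ConvexEReal f := hconv
  have hxf : f x ≠ ⊤ := interior_subset hx
  have hsub : ∀ y, f y ≠ ⊤ → f' x (y - x) ≤ (f y).toReal - (f x).toReal := fun y hy =>
    hconv.le_sub_of_tendsto_slope hnebot hxf hy (hgrad x hx (y - x))
  change (∀ t : ℝ, 0 < t → 0 < totalConvexityModulus f f' x t) ↔ _
  constructor
  · refine fun h y hy hD => tendsto_order.2 ⟨fun a ha => .of_forall fun n =>
      ha.trans_le (norm_nonneg _), fun ε hε => ?_⟩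
    filter_upwards [hD.eventually_lt_const (h ε hε)] with n hn
    exact lt_of_not_ge fun hle =>
      (totalConvexityModulus_le hconv hnebot hxf hsub (hy n) hε hle).not_gt hn
  · intro h t ht
    by_contra! hle
    obtain ⟨y, hy, hD⟩ :=
      exists_seq_tendsto_bregmanDistE_of_totalConvexityModulus_le_zero hnebot hxf hsub hle
    have hnorm := h y (fun n => (hy n).1) hD
    simp only [hy, tendsto_const_nhds_iff] at hnorm
    exact ht.ne' hnorm

/-- Let `E` be a real reflexive Banach space, `f : E → (−∞,+∞]` a proper lower
semicontinuous convex function which is Gâteaux differentiable on `int dom f`, and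
`x ∈ int dom f`.  TFAE: (i) `f` is totally convex at `x` (the modulus of total convexity
`v_f(x,t) = inf {D_f(y,x) : y ∈ dom f, ‖y − x‖ = t}` is positive for every `t > 0`);
(ii) for every sequence `{y_n} ⊆ dom f`, `D_f(y_n,x) → 0` implies `‖y_n − x‖ → 0`. -/
theorem stmt3 {E : Type*} [NormedAddCommGroup E] [NormedSpace ℝ E] [CompleteSpace E]
    (hrefl : Function.Surjective (NormedSpace.inclusionInDoubleDual ℝ E))
    (f : E → EReal)
    (hnebot : ∀ x : E, f x ≠ ⊥)
    (hproper : ∃ x : E, f x ≠ ⊤)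
    (hlsc : LowerSemicontinuous f)
    (hconv : ∀ x y : E, ∀ a b : ℝ, 0 ≤ a → 0 ≤ b → a + b = 1 →
      f (a • x + b • y) ≤ (a : EReal) * f x + (b : EReal) * f y)
    (f' : E → StrongDual ℝ E)
    (hgrad : ∀ z ∈ interior {w : E | f w ≠ ⊤}, ∀ y : E,
      Tendsto (fun t : ℝ => ((f (z + t • y)).toReal - (f z).toReal) / t)
        (𝓝[>] (0 : ℝ)) (𝓝 (f' z y)))
    (x : E) (hx : x ∈ interior {w : E | f w ≠ ⊤}) :
    (∀ t : ℝ, 0 < t →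
      (0 : EReal) < ⨅ (y : E) (_ : f y ≠ ⊤ ∧ ‖y - x‖ = t), BregmanDistE f f' y x)
    ↔
    (∀ y : ℕ → E, (∀ n, f (y n) ≠ ⊤) →
      Tendsto (fun n => BregmanDistE f f' (y n) x) atTop (𝓝 (0 : EReal)) →
      Tendsto (fun n => ‖y n - x‖) atTop (𝓝 (0 : ℝ))) :=
  stmt3_general f hnebot hconv f' hgrad x hx
end

section
/- Let E be a real reflexive Banach space and let f : E → ℝ be a Gâteaux differentiable and totally convex function. If x₁ ∈ E and the sequence {D_f(x_n, x₁)} is bounded, then the sequence {x_n} is bounded. -/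
open Filter Topology Set Bornology

/-! Along the segment from `x` the Bregman distance `D_f(·, x)` is a convex function vanishing at
`x`, so it grows at least linearly: if `D_f(z, x) ≥ c > 0` on the unit sphere around `x`, then
`D_f(y, x) ≥ c ‖y - x‖` outside the unit ball. A bound on `D_f(x_n, x₁)` therefore bounds
`‖x_n - x₁‖`. -/

/-- The (real-valued) Bregman distance `D_f(y,x) = f(y) − f(x) − ⟨∇f(x), y − x⟩` associated with
a real-valued function `f : E → ℝ` and a gradient map `f'`. -/
noncomputable def BregmanDist {E : Type*} [NormedAddCommGroup E] [NormedSpace ℝ E]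
    (f : E → ℝ) (f' : E → StrongDual ℝ E) (y x : E) : ℝ :=
  f y - f x - f' x (y - x)

theorem EReal.exists_pos_le_of_pos_lt_iInf₂ {ι : Type*} {p : ι → Prop} {g : ι → ℝ}
    (h : (0 : EReal) < ⨅ (i : ι) (_ : p i), (g i : EReal)) :
    ∃ c : ℝ, 0 < c ∧ ∀ i, p i → c ≤ g i := by
  obtain ⟨c, hc0, hc⟩ := exists_between h
  lift c to ℝ using ⟨(hc.trans_le le_top).ne, ne_bot_of_gt hc0⟩
  exact ⟨c, mod_cast hc0, fun i hi => mod_cast (hc.trans_le (iInf₂_le i hi)).le⟩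

section BregmanDist

variable {E : Type*} [NormedAddCommGroup E] [NormedSpace ℝ E] {f : E → ℝ} {f' : E → StrongDual ℝ E}

theorem bregmanDist_add_smul_sub_le (hconv : ConvexOn ℝ univ f) (x y : E) {s : ℝ}
    (hs₀ : 0 ≤ s) (hs₁ : s ≤ 1) :
    BregmanDist f f' (x + s • (y - x)) x ≤ s * BregmanDist f f' y x := by
  have hf : f (x + s • (y - x)) ≤ (1 - s) * f x + s * f y := by
    rw [show x + s • (y - x) = (1 - s) • x + s • y by module]
    exact hconv.2 (mem_univ x) (mem_univ y) (by linarith) hs₀ (by ring)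
  simp only [BregmanDist, add_sub_cancel_left, map_smul, smul_eq_mul]
  linarith

theorem mul_norm_sub_le_bregmanDist (hconv : ConvexOn ℝ univ f) {x y : E} {c : ℝ}
    (hsphere : ∀ z, ‖z - x‖ = 1 → c ≤ BregmanDist f f' z x) (hy : 1 ≤ ‖y - x‖) :
    c * ‖y - x‖ ≤ BregmanDist f f' y x := by
  set t := ‖y - x‖
  have ht : 0 < t := one_pos.trans_le hy
  have hz : ‖(x + t⁻¹ • (y - x)) - x‖ = 1 := by
    rw [add_sub_cancel_left, norm_smul, norm_inv, norm_norm, inv_mul_cancel₀ ht.ne']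
  have hc : c ≤ t⁻¹ * BregmanDist f f' y x :=
    (hsphere _ hz).trans
      (bregmanDist_add_smul_sub_le hconv x y (inv_nonneg.2 ht.le) (inv_le_one_of_one_le₀ hy))
  calc c * t ≤ t⁻¹ * BregmanDist f f' y x * t := mul_le_mul_of_nonneg_right hc ht.le
    _ = BregmanDist f f' y x := by field_simp

end BregmanDist

theorem stmt5_general {E : Type*} [NormedAddCommGroup E] [NormedSpace ℝ E]
    (f : E → ℝ) (hconv : ConvexOn ℝ Set.univ f)
    (f' : E → StrongDual ℝ E)
    (htotconv : ∀ x : E, ∀ t : ℝ, 0 < t →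
      (0 : EReal) < ⨅ (y : E) (_ : ‖y - x‖ = t), ((BregmanDist f f' y x : ℝ) : EReal))
    (x₁ : E) (x : ℕ → E)
    (hbdd : ∃ M : ℝ, ∀ n : ℕ, BregmanDist f f' (x n) x₁ ≤ M) :
    IsBounded (Set.range x) := by
  obtain ⟨M, hM⟩ := hbdd
  obtain ⟨c, hc, hsphere⟩ := EReal.exists_pos_le_of_pos_lt_iInf₂ (htotconv x₁ 1 one_pos)
  refine Metric.isBounded_closedBall (x := x₁) (r := max 1 (M / c)) |>.subset ?_
  rintro _ ⟨n, rfl⟩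
  rw [Metric.mem_closedBall, dist_eq_norm]
  rcases le_total ‖x n - x₁‖ 1 with hle | hge
  · exact hle.trans (le_max_left _ _)
  · refine le_max_of_le_right ((le_div_iff₀' hc).2 ?_)
    exact (mul_norm_sub_le_bregmanDist hconv hsphere hge).trans (hM n)

/-- Let `E` be a real reflexive Banach space and `f : E → ℝ` a Gâteaux
differentiable and totally convex (convex) function.  If `x₁ ∈ E` and the sequence
`{D_f(x_n, x₁)}` is bounded, then the sequence `{x_n}` is bounded. -/
theorem stmt5 {E : Type*} [NormedAddCommGroup E] [NormedSpace ℝ E] [CompleteSpace E]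
    (hrefl : Function.Surjective (NormedSpace.inclusionInDoubleDual ℝ E))
    (f : E → ℝ) (hconv : ConvexOn ℝ Set.univ f)
    (f' : E → StrongDual ℝ E)
    (hgrad : ∀ x y : E,
      Tendsto (fun t : ℝ => (f (x + t • y) - f x) / t) (𝓝[>] (0 : ℝ)) (𝓝 (f' x y)))
    (htotconv : ∀ x : E, ∀ t : ℝ, 0 < t →
      (0 : EReal) < ⨅ (y : E) (_ : ‖y - x‖ = t), ((BregmanDist f f' y x : ℝ) : EReal))
    (x₁ : E) (x : ℕ → E)
    (hbdd : ∃ M : ℝ, ∀ n : ℕ, BregmanDist f f' (x n) x₁ ≤ M) :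
    IsBounded (Set.range x) :=
  stmt5_general f hconv f' htotconv x₁ x hbdd
end

section
/- Let E be a real reflexive Banach space and let f : E → ℝ be a Legendre function such that ∇f* is bounded on bounded subsets of int dom f*. If x₁ ∈ E and the sequence {D_f(x₁, x_n)} is bounded, then the sequence {x_n} is bounded. -/
/-!
The gradients `f' (x n)` are bounded: a convex function with a subgradient everywhere is lower
semicontinuous, hence (Baire) continuous, so `f ≤ f x₁ + 1` on a ball around `x₁`, and the bound
on `D_f(x₁, x n)` turns the subgradient inequality at `x n` into a uniform bound for `f' (x n)` on
that ball. By Young's equality `x n` is a subgradient of `f*` at `f' (x n)`; as `∂f*` is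
single-valued, a Hahn–Banach separation puts `f' (x n)` in `int dom f*`, where `∇f* (f' (x n))` is
a subgradient as well, hence equal to `x n`. So `{x n}` is the image under `∇f*` of a bounded
subset of `int dom f*`.
-/

open Filter Topology Set Bornology

section

variable {E : Type*} [NormedAddCommGroup E] [NormedSpace ℝ E]

theorem ConvexOn.add_le_of_tendsto_slope {s : Set E} {f : E → ℝ} (hf : ConvexOn ℝ s f)
    {x v : E} (hx : x ∈ s) (hxv : x + v ∈ s) {L : ℝ}
    (hL : Tendsto (fun t : ℝ => (f (x + t • v) - f x) / t) (𝓝[>] 0) (𝓝 L)) :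
    f x + L ≤ f (x + v) := by
  suffices L ≤ f (x + v) - f x by linarith
  refine le_of_tendsto hL ?_
  filter_upwards [Ioo_mem_nhdsGT (zero_lt_one' ℝ)] with t ⟨ht₀, ht₁⟩
  have hcombo := hf.2 hx hxv (sub_nonneg.2 ht₁.le) ht₀.le (sub_add_cancel 1 t)
  rw [show (1 - t) • x + t • (x + v) = x + t • v by module, smul_eq_mul, smul_eq_mul] at hcombo
  rw [div_le_iff₀ ht₀]
  linarith

theorem lowerSemicontinuous_of_forall_subgradient {f : E → ℝ} {f' : E → StrongDual ℝ E}
    (hsub : ∀ x y, f x + f' x (y - x) ≤ f y) : LowerSemicontinuous f := by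
  intro x c hc
  have hlim : Tendsto (fun y => f x + f' x (y - x)) (𝓝 x) (𝓝 (f x)) :=
    (by fun_prop : Continuous fun y => f x + f' x (y - x)).tendsto' x (f x) (by simp)
  filter_upwards [hlim.eventually (lt_mem_nhds hc)] with y hy using hy.trans_le (hsub x y)

theorem ConvexOn.continuous_of_lowerSemicontinuous [CompleteSpace E] {f : E → ℝ}
    (hf : ConvexOn ℝ univ f) (hlsc : LowerSemicontinuous f) : Continuous f := by
  -- Baire: some closed sublevel set `{f ≤ k}` has interior, so `f` is bounded above near a point.
  obtain ⟨k, z, hz⟩ := nonempty_interior_of_iUnion_of_closed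
    (fun k : ℕ => hlsc.isClosed_preimage (k : ℝ))
    (iUnion_eq_univ_iff.2 fun y => exists_nat_ge (f y))
  have hbdd : (𝓝 z).IsBoundedUnder (· ≤ ·) f :=
    isBoundedUnder_of_eventually_le (mem_interior_iff_mem_nhds.1 hz)
  have hbdd_iff_cont := (hf.continuousOn_tfae isOpen_univ univ_nonempty).out 3 1
  exact continuousOn_univ.1 (hbdd_iff_cont.1 ⟨z, mem_univ z, hbdd⟩)

theorem apply_le_of_bregmanDist_le {f : E → ℝ} {f' : E → StrongDual ℝ E}
    (hsub : ∀ x y, f x + f' x (y - x) ≤ f y) {x₁ y v : E} {M : ℝ}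
    (hM : BregmanDist f f' x₁ y ≤ M) : f' y v ≤ f (x₁ + v) - f x₁ + M := by
  have hv := hsub y (x₁ + v)
  rw [show x₁ + v - y = (x₁ - y) + v by abel, map_add] at hv
  unfold BregmanDist at hM
  linarith

theorem norm_le_of_bregmanDist_le {f : E → ℝ} {f' : E → StrongDual ℝ E}
    (hsub : ∀ x y, f x + f' x (y - x) ≤ f y) {x₁ y : E} {r C M : ℝ} (hr : 0 < r)
    (hC : ∀ z ∈ Metric.closedBall x₁ r, f z ≤ C) (hM : BregmanDist f f' x₁ y ≤ M) :
    ‖f' y‖ ≤ (C - f x₁ + M) / r := by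
  have hbound : ∀ v ∈ Metric.closedBall (0 : E) r, f' y v ≤ C - f x₁ + M := fun v hv => by
    have := hC (x₁ + v) (by simpa using hv)
    linarith [apply_le_of_bregmanDist_le (v := v) hsub hM]
  refine ContinuousLinearMap.opNorm_bound_of_ball_bound hr _ _ fun v hv => ?_
  have hneg := hbound (-v) (by simpa using hv)
  rw [map_neg] at hneg
  exact abs_le.2 ⟨by linarith, hbound v hv⟩

theorem isBounded_range_gradient_of_bregmanDist_le [CompleteSpace E] {f : E → ℝ}
    {f' : E → StrongDual ℝ E} (hf : ConvexOn ℝ univ f) (hsub : ∀ x y, f x + f' x (y - x) ≤ f y)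
    {x₁ : E} {x : ℕ → E} {M : ℝ} (hM : ∀ n, BregmanDist f f' x₁ (x n) ≤ M) :
    IsBounded (range fun n => f' (x n)) := by
  have hcont :=
    hf.continuous_of_lowerSemicontinuous (lowerSemicontinuous_of_forall_subgradient hsub)
  obtain ⟨r, hr, hC⟩ := Metric.nhds_basis_closedBall.eventually_iff.1
    ((hcont.tendsto x₁).eventually (ge_mem_nhds (lt_add_one (f x₁))))
  exact isBounded_iff_forall_norm_le.2
    ⟨_, forall_mem_range.2 fun n => norm_le_of_bregmanDist_le hsub hr hC (hM n)⟩

section Subgradient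

variable {V : Type*} [NormedAddCommGroup V] [NormedSpace ℝ V]

def IsSubgradientAt (F : V → EReal) (ξ : V) (Λ : StrongDual ℝ V) : Prop :=
  ∀ η, F ξ + ((Λ (η - ξ) : ℝ) : EReal) ≤ F η

theorem IsSubgradientAt.mem_interior_dom {F : V → EReal} {ξ : V} {Λ : StrongDual ℝ V}
    (hΛ : IsSubgradientAt F ξ Λ) (hdom : Convex ℝ {η | F η ≠ ⊤})
    (hint : (interior {η | F η ≠ ⊤}).Nonempty)
    (huniq : {Λ | IsSubgradientAt F ξ Λ}.Subsingleton) :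
    ξ ∈ interior {η | F η ≠ ⊤} := by
  by_contra hξ
  obtain ⟨ν, u, hν, hνdom, hνξ⟩ := geometric_hahn_banach_of_nonempty_interior hdom
    (convex_singleton ξ) (disjoint_singleton_right.2 hξ) hint (singleton_nonempty ξ)
  -- a supporting functional `ν` of the domain at `ξ` perturbs `Λ` into a second subgradient
  have hΛν : IsSubgradientAt F ξ (Λ + ν) := fun η => by
    by_cases hη : F η = ⊤
    · simp [hη]
    have hνη : ν (η - ξ) ≤ 0 := by
      rw [map_sub]
      linarith [hνdom η hη, hνξ ξ rfl]
    refine le_trans ?_ (hΛ η)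
    gcongr
    simpa using hνη
  exact hν (add_eq_left.1 (huniq hΛν hΛ))

theorem isSubgradientAt_of_tendsto_slope {F : V → EReal} {ξ : V} {Λ : StrongDual ℝ V}
    (hF : ConvexOn ℝ {η | F η ≠ ⊤} fun η => (F η).toReal) (hbot : ∀ η, F η ≠ ⊥)
    (hξ : F ξ ≠ ⊤)
    (hΛ : ∀ η, Tendsto (fun t : ℝ => ((F (ξ + t • η)).toReal - (F ξ).toReal) / t)
      (𝓝[>] 0) (𝓝 (Λ η))) :
    IsSubgradientAt F ξ Λ := fun η => by
  by_cases hη : F η = ⊤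
  · simp [hη]
  have hle := hF.add_le_of_tendsto_slope hξ (by simpa using hη) (hΛ (η - ξ))
  rw [add_sub_cancel] at hle
  rw [← EReal.coe_toReal hξ (hbot ξ), ← EReal.coe_toReal hη (hbot η), ← EReal.coe_add]
  exact EReal.coe_le_coe hle

end Subgradient

section FenchelConjugate

noncomputable def fenchelConjugate (f : E → ℝ) (ξ : StrongDual ℝ E) : EReal :=
  ⨆ x, ((ξ x - f x : ℝ) : EReal)

variable {f : E → ℝ}

theorem le_fenchelConjugate (ξ : StrongDual ℝ E) (x : E) :
    ((ξ x - f x : ℝ) : EReal) ≤ fenchelConjugate f ξ :=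
  le_iSup (fun x => ((ξ x - f x : ℝ) : EReal)) x

theorem fenchelConjugate_ne_bot (ξ : StrongDual ℝ E) : fenchelConjugate f ξ ≠ ⊥ :=
  ne_bot_of_le_ne_bot (EReal.coe_ne_bot _) (le_fenchelConjugate ξ 0)

theorem sub_le_toReal_fenchelConjugate {ξ : StrongDual ℝ E} (hξ : fenchelConjugate f ξ ≠ ⊤)
    (x : E) : ξ x - f x ≤ (fenchelConjugate f ξ).toReal := by
  rw [← EReal.coe_le_coe_iff, EReal.coe_toReal hξ (fenchelConjugate_ne_bot ξ)]
  exact le_fenchelConjugate ξ x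

theorem convexOn_toReal_fenchelConjugate :
    ConvexOn ℝ {ξ | fenchelConjugate f ξ ≠ ⊤} fun ξ => (fenchelConjugate f ξ).toReal := by
  have hcombo : ∀ ⦃ξ₁⦄, fenchelConjugate f ξ₁ ≠ ⊤ → ∀ ⦃ξ₂⦄, fenchelConjugate f ξ₂ ≠ ⊤ →
      ∀ ⦃a b : ℝ⦄, 0 ≤ a → 0 ≤ b → a + b = 1 →
      fenchelConjugate f (a • ξ₁ + b • ξ₂) ≤
        ((a * (fenchelConjugate f ξ₁).toReal + b * (fenchelConjugate f ξ₂).toReal : ℝ) : EReal) :=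
    fun ξ₁ h₁ ξ₂ h₂ a b ha hb hab => iSup_le fun x => EReal.coe_le_coe_iff.2 <| by
      have hx₁ := mul_le_mul_of_nonneg_left (sub_le_toReal_fenchelConjugate h₁ x) ha
      have hx₂ := mul_le_mul_of_nonneg_left (sub_le_toReal_fenchelConjugate h₂ x) hb
      have hfx : f x = a * f x + b * f x := by rw [← add_mul, hab, one_mul]
      simp only [add_apply, smul_apply, smul_eq_mul]
      linarith
  have hdom : Convex ℝ {ξ | fenchelConjugate f ξ ≠ ⊤} :=
    fun ξ₁ h₁ ξ₂ h₂ a b ha hb hab =>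
      ne_top_of_le_ne_top (EReal.coe_ne_top _) (hcombo h₁ h₂ ha hb hab)
  refine ⟨hdom, fun ξ₁ h₁ ξ₂ h₂ a b ha hb hab => ?_⟩
  have := EReal.toReal_le_toReal (hcombo h₁ h₂ ha hb hab) (fenchelConjugate_ne_bot _)
    (EReal.coe_ne_top _)
  rwa [EReal.toReal_coe] at this

theorem fenchelConjugate_eq_of_subgradient {ξ : StrongDual ℝ E} {x : E}
    (hξ : ∀ y, f x + ξ (y - x) ≤ f y) : fenchelConjugate f ξ = ((ξ x - f x : ℝ) : EReal) :=
  le_antisymm (iSup_le fun y => EReal.coe_le_coe_iff.2 <| by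
    have := hξ y
    rw [map_sub] at this
    linarith) (le_fenchelConjugate ξ x)

theorem isSubgradientAt_fenchelConjugate {ξ : StrongDual ℝ E} {x : E}
    (hξ : ∀ y, f x + ξ (y - x) ≤ f y) :
    IsSubgradientAt (fenchelConjugate f) ξ (NormedSpace.inclusionInDoubleDual ℝ E x) :=
  fun η => by
    rw [fenchelConjugate_eq_of_subgradient hξ, ← EReal.coe_add]
    convert le_fenchelConjugate η x using 2
    simp

end FenchelConjugate

end

theorem stmt6_general {E : Type*} [NormedAddCommGroup E] [NormedSpace ℝ E] [CompleteSpace E]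
    (f : E → ℝ) (hconv : ConvexOn ℝ Set.univ f)
    (f' : E → StrongDual ℝ E)
    (hgrad : ∀ x y : E,
      Tendsto (fun t : ℝ => (f (x + t • y) - f x) / t) (𝓝[>] (0 : ℝ)) (𝓝 (f' x y)))
    -- the Fenchel conjugate of `f`
    (fstar : StrongDual ℝ E → EReal)
    (hfstar : ∀ ξ : StrongDual ℝ E, fstar ξ = ⨆ x : E, ((ξ x - f x : ℝ) : EReal))
    -- (L2): `int dom f* ≠ ∅` and `∂f*` is single-valued on its domain
    (hL2 : (interior {ξ : StrongDual ℝ E | fstar ξ ≠ ⊤}).Nonempty ∧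
      ∀ ξ : StrongDual ℝ E, Set.Subsingleton
        {Λ : StrongDual ℝ (StrongDual ℝ E) |
          ∀ η : StrongDual ℝ E, fstar ξ + ((Λ (η - ξ) : ℝ) : EReal) ≤ fstar η})
    -- `∇f*` (under the reflexive identification `E** = E`) …
    (g : StrongDual ℝ E → E)
    (hg : ∀ ξ ∈ interior {ξ : StrongDual ℝ E | fstar ξ ≠ ⊤},
      ∀ η : StrongDual ℝ E,
        Tendsto (fun t : ℝ => ((fstar (ξ + t • η)).toReal - (fstar ξ).toReal) / t)
          (𝓝[>] (0 : ℝ)) (𝓝 (η (g ξ))))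
    -- … is bounded on bounded subsets of `int dom f*`
    (hgbdd : ∀ B : Set (StrongDual ℝ E), IsBounded B →
      B ⊆ interior {ξ : StrongDual ℝ E | fstar ξ ≠ ⊤} → IsBounded (g '' B))
    (x₁ : E) (x : ℕ → E)
    (hbdd : ∃ M : ℝ, ∀ n : ℕ, BregmanDist f f' x₁ (x n) ≤ M) :
    IsBounded (Set.range x) := by
  obtain ⟨M, hM⟩ := hbdd
  obtain rfl : fstar = fenchelConjugate f := funext hfstar
  have hsub : ∀ x y, f x + f' x (y - x) ≤ f y := fun x y => by
    simpa using hconv.add_le_of_tendsto_slope (mem_univ x) (mem_univ _) (hgrad x (y - x))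
  have hJ (n : ℕ) : IsSubgradientAt (fenchelConjugate f) (f' (x n))
      (NormedSpace.inclusionInDoubleDual ℝ E (x n)) :=
    isSubgradientAt_fenchelConjugate (hsub (x n))
  have hint (n : ℕ) : f' (x n) ∈ interior {ξ | fenchelConjugate f ξ ≠ ⊤} :=
    (hJ n).mem_interior_dom convexOn_toReal_fenchelConjugate.1 hL2.1 (hL2.2 _)
  have hgx (n : ℕ) : g (f' (x n)) = x n := by
    refine (NormedSpace.inclusionInDoubleDualLi (E := E) ℝ).injective (hL2.2 _ ?_ (hJ n))
    exact isSubgradientAt_of_tendsto_slope convexOn_toReal_fenchelConjugate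
      fenchelConjugate_ne_bot (interior_subset (hint n)) (hg _ (hint n))
  refine (hgbdd _ (isBounded_range_gradient_of_bregmanDist_le hconv hsub hM)
    (range_subset_iff.2 hint)).subset ?_
  rintro _ ⟨n, rfl⟩
  exact ⟨_, mem_range_self n, hgx n⟩

/-- Let `E` be a real reflexive Banach space and `f : E → ℝ` a (convex,
Gâteaux differentiable) Legendre function such that `∇f*` is bounded on bounded subsets of
`int dom f*`.  If `x₁ ∈ E` and the sequence `{D_f(x₁, x_n)}` is bounded, then the sequence
`{x_n}` is bounded. -/
theorem stmt6 {E : Type*} [NormedAddCommGroup E] [NormedSpace ℝ E] [CompleteSpace E]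
    (hrefl : Function.Surjective (NormedSpace.inclusionInDoubleDual ℝ E))
    (f : E → ℝ) (hconv : ConvexOn ℝ Set.univ f)
    (f' : E → StrongDual ℝ E)
    (hgrad : ∀ x y : E,
      Tendsto (fun t : ℝ => (f (x + t • y) - f x) / t) (𝓝[>] (0 : ℝ)) (𝓝 (f' x y)))
    -- the Fenchel conjugate of `f`
    (fstar : StrongDual ℝ E → EReal)
    (hfstar : ∀ ξ : StrongDual ℝ E, fstar ξ = ⨆ x : E, ((ξ x - f x : ℝ) : EReal))
    -- (L1): `int dom f ≠ ∅` and `∂f` is single-valued on its domain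
    (hL1 : (interior (Set.univ : Set E)).Nonempty ∧
      ∀ x : E, Set.Subsingleton
        {ξ : StrongDual ℝ E | ∀ y : E, f x + ξ (y - x) ≤ f y})
    -- (L2): `int dom f* ≠ ∅` and `∂f*` is single-valued on its domain
    (hL2 : (interior {ξ : StrongDual ℝ E | fstar ξ ≠ ⊤}).Nonempty ∧
      ∀ ξ : StrongDual ℝ E, Set.Subsingleton
        {Λ : StrongDual ℝ (StrongDual ℝ E) |
          ∀ η : StrongDual ℝ E, fstar ξ + ((Λ (η - ξ) : ℝ) : EReal) ≤ fstar η})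
    -- `∇f*` (under the reflexive identification `E** = E`) …
    (g : StrongDual ℝ E → E)
    (hg : ∀ ξ ∈ interior {ξ : StrongDual ℝ E | fstar ξ ≠ ⊤},
      ∀ η : StrongDual ℝ E,
        Tendsto (fun t : ℝ => ((fstar (ξ + t • η)).toReal - (fstar ξ).toReal) / t)
          (𝓝[>] (0 : ℝ)) (𝓝 (η (g ξ))))
    -- … is bounded on bounded subsets of `int dom f*`
    (hgbdd : ∀ B : Set (StrongDual ℝ E), IsBounded B →
      B ⊆ interior {ξ : StrongDual ℝ E | fstar ξ ≠ ⊤} → IsBounded (g '' B))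
    (x₁ : E) (x : ℕ → E)
    (hbdd : ∃ M : ℝ, ∀ n : ℕ, BregmanDist f f' x₁ (x n) ≤ M) :
    IsBounded (Set.range x) :=
  stmt6_general f hconv f' hgrad fstar hfstar hL2 g hg hgbdd x₁ x hbdd
end

section
/- Let E be a real reflexive Banach space, let f : E → (−∞,+∞] be Gâteaux differentiable and totally convex on int dom f, let x ∈ int dom f, and let C ⊆ int dom f be a nonempty, closed and convex set. Then for z₀ ∈ C the following are equivalent: (i) z₀ = proj_C^f(x), the Bregman projection of x onto C; (ii) z₀ is the unique solution z ∈ C of the variational inequality ⟨∇f(x) − ∇f(z), z − y⟩ ≥ 0 for all y ∈ C; (iii) z₀ is the unique solution z ∈ C of the inequality D_f(y,z) + D_f(z,x) ≤ D_f(y,x) for all y ∈ C. -/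
open Filter Topology Set Bornology

/-- The Bregman distance `D_f(y,x) = f(y) − f(x) − ⟨∇f(x), y − x⟩` of an extended-real-valued
function `f`, real-valued (via `EReal.toReal`; it is used only at points where `f` is finite). -/
noncomputable def BregmanDistR {E : Type*} [NormedAddCommGroup E] [NormedSpace ℝ E]
    (f : E → EReal) (f' : E → StrongDual ℝ E) (y x : E) : ℝ :=
  (f y).toReal - (f x).toReal - f' x (y - x)

/-!
Everything rests on the three-point identity
`D(y,z) + D(z,x) = D(y,x) - ⟨∇f(x) − ∇f(z), z − y⟩`, which makes (ii) and (iii) equivalent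
pointwise in `z`. For (i) ⇔ (ii): differentiating `D(·,x)` at `z` in the direction `y − z` gives
`⟨∇f(z) − ∇f(x), y − z⟩`, which is nonnegative at a minimiser over the convex set `C`;
conversely the identity gives `D(y,x) − D(z,x) = D(y,z) + ⟨∇f(x) − ∇f(z), z − y⟩`, and
`D(y,z) ≥ 0` by convexity of `f`.
-/

lemma convexOn_toReal_of_ereal {E : Type*} [AddCommGroup E] [Module ℝ E] {f : E → EReal}
    (hnebot : ∀ x, f x ≠ ⊥)
    (hconv : ∀ x y : E, ∀ a b : ℝ, 0 ≤ a → 0 ≤ b → a + b = 1 →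
      f (a • x + b • y) ≤ (a : EReal) * f x + (b : EReal) * f y) :
    ConvexOn ℝ {w | f w ≠ ⊤} (fun w => (f w).toReal) := by
  have hreal : ∀ {x y : E}, f x ≠ ⊤ → f y ≠ ⊤ → ∀ {a b : ℝ}, 0 ≤ a → 0 ≤ b → a + b = 1 →
      f (a • x + b • y) ≤ ((a * (f x).toReal + b * (f y).toReal : ℝ) : EReal) := by
    intro x y hx hy a b ha hb hab
    have h := hconv x y a b ha hb hab
    rwa [← EReal.coe_toReal hx (hnebot x), ← EReal.coe_toReal hy (hnebot y),
      ← EReal.coe_mul, ← EReal.coe_mul, ← EReal.coe_add] at h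
  refine ⟨fun x hx y hy a b ha hb hab => ?_, fun x hx y hy a b ha hb hab => ?_⟩
  · exact ne_top_of_le_ne_top (EReal.coe_ne_top _) (hreal hx hy ha hb hab)
  · simpa only [smul_eq_mul, EReal.toReal_coe] using
      EReal.toReal_le_toReal (hreal hx hy ha hb hab) (hnebot _) (EReal.coe_ne_top _)

lemma ConvexOn.le_sub_of_tendsto_slope {E : Type*} [AddCommGroup E] [Module ℝ E]
    {s : Set E} {g : E → ℝ} (hg : ConvexOn ℝ s g) {y z : E} (hy : y ∈ s) (hz : z ∈ s) {L : ℝ}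
    (hL : Tendsto (fun t : ℝ => (g (z + t • (y - z)) - g z) / t) (𝓝[>] 0) (𝓝 L)) :
    L ≤ g y - g z := by
  refine le_of_tendsto hL ?_
  filter_upwards [Ioo_mem_nhdsGT zero_lt_one] with t ⟨ht0, ht1⟩
  have h := hg.2 hz hy (sub_nonneg.2 ht1.le) ht0.le (sub_add_cancel 1 t)
  rw [show (1 - t) • z + t • y = z + t • (y - z) by module, smul_eq_mul, smul_eq_mul] at h
  rw [div_le_iff₀ ht0]
  linarith

lemma IsMinOn.nonneg_of_tendsto_slope {E : Type*} [AddCommGroup E] [Module ℝ E]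
    {C : Set E} {φ : E → ℝ} (hC : Convex ℝ C) {y z : E} (hy : y ∈ C) (hz : z ∈ C)
    (hmin : IsMinOn φ C z) {L : ℝ}
    (hL : Tendsto (fun t : ℝ => (φ (z + t • (y - z)) - φ z) / t) (𝓝[>] 0) (𝓝 L)) :
    0 ≤ L := by
  refine ge_of_tendsto hL ?_
  filter_upwards [Ioo_mem_nhdsGT zero_lt_one] with t ⟨ht0, ht1⟩
  exact div_nonneg (sub_nonneg.2 (isMinOn_iff.1 hmin _
    (hC.add_smul_sub_mem hz hy ⟨ht0.le, ht1.le⟩))) ht0.le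

section Bregman

variable {E : Type*} [NormedAddCommGroup E] [NormedSpace ℝ E] {f : E → EReal}
  {f' : E → StrongDual ℝ E}

lemma bregmanDistR_add_bregmanDistR (x y z : E) :
    BregmanDistR f f' y z + BregmanDistR f f' z x =
      BregmanDistR f f' y x - (f' x - f' z) (z - y) := by
  have hsplit : f' x (y - x) = f' x (y - z) + f' x (z - x) := by
    rw [← map_add, sub_add_sub_cancel]
  simp only [BregmanDistR, hsplit, sub_apply, ← neg_sub y z, map_neg]
  ring

lemma bregmanDistR_three_point_le_iff (x y z : E) :
    BregmanDistR f f' y z + BregmanDistR f f' z x ≤ BregmanDistR f f' y x ↔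
      0 ≤ (f' x - f' z) (z - y) := by
  rw [bregmanDistR_add_bregmanDistR]
  constructor <;> intro h <;> linarith

lemma bregmanDistR_nonneg (hf : ConvexOn ℝ {w | f w ≠ ⊤} (fun w => (f w).toReal)) {y z : E}
    (hy : f y ≠ ⊤) (hz : f z ≠ ⊤)
    (hgrad : Tendsto (fun t : ℝ => ((f (z + t • (y - z))).toReal - (f z).toReal) / t)
      (𝓝[>] 0) (𝓝 (f' z (y - z)))) :
    0 ≤ BregmanDistR f f' y z := by
  have := hf.le_sub_of_tendsto_slope (s := {w | f w ≠ ⊤}) hy hz hgrad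
  rw [BregmanDistR]
  linarith

lemma tendsto_slope_bregmanDistR {x z v : E}
    (hgrad : Tendsto (fun t : ℝ => ((f (z + t • v)).toReal - (f z).toReal) / t)
      (𝓝[>] 0) (𝓝 (f' z v))) :
    Tendsto (fun t : ℝ => (BregmanDistR f f' (z + t • v) x - BregmanDistR f f' z x) / t)
      (𝓝[>] 0) (𝓝 (f' z v - f' x v)) := by
  refine (hgrad.sub_const (f' x v)).congr' ?_
  filter_upwards [self_mem_nhdsWithin] with t (ht : 0 < t)
  have hlin : f' x (z + t • v - x) = f' x (z - x) + t * f' x v := by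
    rw [add_sub_right_comm, map_add, map_smul, smul_eq_mul]
  simp only [BregmanDistR, hlin]
  field_simp
  ring

lemma isMinOn_bregmanDistR_iff (hf : ConvexOn ℝ {w | f w ≠ ⊤} (fun w => (f w).toReal))
    {C : Set E} (hC : Convex ℝ C) (hCdom : C ⊆ {w | f w ≠ ⊤})
    (hgrad : ∀ z ∈ C, ∀ v : E,
      Tendsto (fun t : ℝ => ((f (z + t • v)).toReal - (f z).toReal) / t)
        (𝓝[>] 0) (𝓝 (f' z v)))
    (x : E) {z : E} (hz : z ∈ C) :
    IsMinOn (fun y => BregmanDistR f f' y x) C z ↔ ∀ y ∈ C, 0 ≤ (f' x - f' z) (z - y) := by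
  constructor
  · intro hmin y hy
    have h := hmin.nonneg_of_tendsto_slope hC hy hz (tendsto_slope_bregmanDistR (hgrad z hz _))
    rwa [← neg_sub y z, map_neg, sub_apply, neg_sub]
  · intro hvi
    refine isMinOn_iff.2 fun y hy => ?_
    have hD := bregmanDistR_nonneg hf (hCdom hy) (hCdom hz) (hgrad z hz (y - z))
    linarith [bregmanDistR_add_bregmanDistR (f := f) (f' := f') x y z, hvi y hy]

end Bregman

theorem stmt7_general {E : Type*} [NormedAddCommGroup E] [NormedSpace ℝ E]
    (f : E → EReal)
    (hnebot : ∀ x : E, f x ≠ ⊥)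
    (hconv : ∀ x y : E, ∀ a b : ℝ, 0 ≤ a → 0 ≤ b → a + b = 1 →
      f (a • x + b • y) ≤ (a : EReal) * f x + (b : EReal) * f y)
    (f' : E → StrongDual ℝ E)
    (hgrad : ∀ z ∈ interior {w : E | f w ≠ ⊤}, ∀ y : E,
      Tendsto (fun t : ℝ => ((f (z + t • y)).toReal - (f z).toReal) / t)
        (𝓝[>] (0 : ℝ)) (𝓝 (f' z y)))
    (x : E)
    (C : Set E) (hCconv : Convex ℝ C)
    (hCsub : C ⊆ interior {w : E | f w ≠ ⊤})
    (z₀ : E) (hz₀ : z₀ ∈ C) :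
    -- (i) ↔ (ii)
    (((∀ y ∈ C, BregmanDistR f f' z₀ x ≤ BregmanDistR f f' y x) ∧
      (∀ z ∈ C, (∀ y ∈ C, BregmanDistR f f' z x ≤ BregmanDistR f f' y x) → z = z₀))
     ↔
     ((∀ y ∈ C, 0 ≤ (f' x - f' z₀) (z₀ - y)) ∧
      (∀ z ∈ C, (∀ y ∈ C, 0 ≤ (f' x - f' z) (z - y)) → z = z₀)))
    ∧
    -- (ii) ↔ (iii)
    (((∀ y ∈ C, 0 ≤ (f' x - f' z₀) (z₀ - y)) ∧
      (∀ z ∈ C, (∀ y ∈ C, 0 ≤ (f' x - f' z) (z - y)) → z = z₀))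
     ↔
     ((∀ y ∈ C,
        BregmanDistR f f' y z₀ + BregmanDistR f f' z₀ x ≤ BregmanDistR f f' y x) ∧
      (∀ z ∈ C, (∀ y ∈ C,
        BregmanDistR f f' y z + BregmanDistR f f' z x ≤ BregmanDistR f f' y x) → z = z₀))) := by
  have hmin_iff_vi : ∀ z ∈ C, (∀ y ∈ C, BregmanDistR f f' z x ≤ BregmanDistR f f' y x) ↔
      ∀ y ∈ C, 0 ≤ (f' x - f' z) (z - y) := fun z hz =>
    isMinOn_iff.symm.trans <| isMinOn_bregmanDistR_iff (convexOn_toReal_of_ereal hnebot hconv)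
      hCconv (hCsub.trans interior_subset) (fun z hz => hgrad z (hCsub hz)) x hz
  have hvi_iff_three_point : ∀ z : E, (∀ y ∈ C, 0 ≤ (f' x - f' z) (z - y)) ↔
      ∀ y ∈ C, BregmanDistR f f' y z + BregmanDistR f f' z x ≤ BregmanDistR f f' y x :=
    fun z => forall₂_congr fun y _ => (bregmanDistR_three_point_le_iff x y z).symm
  exact ⟨and_congr (hmin_iff_vi z₀ hz₀)
      (forall₂_congr fun z hz => imp_congr_left (hmin_iff_vi z hz)),
    and_congr (hvi_iff_three_point z₀)
      (forall₂_congr fun z _ => imp_congr_left (hvi_iff_three_point z))⟩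

/-- Let `E` be a real reflexive Banach space, `f : E → (−∞,+∞]` (proper,
convex, lower semicontinuous) Gâteaux differentiable and totally convex on `int dom f`,
`x ∈ int dom f` and `C ⊆ int dom f` nonempty closed convex.  Then for `z₀ ∈ C` TFAE:
(i) `z₀` is the Bregman projection of `x` onto `C` (the unique minimizer of `D_f(·,x)` on `C`);
(ii) `z₀` is the unique solution `z ∈ C` of `⟨∇f(x) − ∇f(z), z − y⟩ ≥ 0` for all `y ∈ C`;
(iii) `z₀` is the unique solution `z ∈ C` of `D_f(y,z) + D_f(z,x) ≤ D_f(y,x)` for all `y ∈ C`. -/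
theorem stmt7 {E : Type*} [NormedAddCommGroup E] [NormedSpace ℝ E] [CompleteSpace E]
    (hrefl : Function.Surjective (NormedSpace.inclusionInDoubleDual ℝ E))
    (f : E → EReal)
    (hnebot : ∀ x : E, f x ≠ ⊥)
    (hproper : ∃ x : E, f x ≠ ⊤)
    (hlsc : LowerSemicontinuous f)
    (hconv : ∀ x y : E, ∀ a b : ℝ, 0 ≤ a → 0 ≤ b → a + b = 1 →
      f (a • x + b • y) ≤ (a : EReal) * f x + (b : EReal) * f y)
    (f' : E → StrongDual ℝ E)
    (hgrad : ∀ z ∈ interior {w : E | f w ≠ ⊤}, ∀ y : E,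
      Tendsto (fun t : ℝ => ((f (z + t • y)).toReal - (f z).toReal) / t)
        (𝓝[>] (0 : ℝ)) (𝓝 (f' z y)))
    -- total convexity of `f` on `int dom f`
    (htotconv : ∀ z ∈ interior {w : E | f w ≠ ⊤}, ∀ t : ℝ, 0 < t →
      (0 : EReal) < ⨅ (y : E) (_ : f y ≠ ⊤ ∧ ‖y - z‖ = t),
        ((BregmanDistR f f' y z : ℝ) : EReal))
    (x : E) (hx : x ∈ interior {w : E | f w ≠ ⊤})
    (C : Set E) (hCne : C.Nonempty) (hCcl : IsClosed C) (hCconv : Convex ℝ C)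
    (hCsub : C ⊆ interior {w : E | f w ≠ ⊤})
    (z₀ : E) (hz₀ : z₀ ∈ C) :
    -- (i) ↔ (ii)
    (((∀ y ∈ C, BregmanDistR f f' z₀ x ≤ BregmanDistR f f' y x) ∧
      (∀ z ∈ C, (∀ y ∈ C, BregmanDistR f f' z x ≤ BregmanDistR f f' y x) → z = z₀))
     ↔
     ((∀ y ∈ C, 0 ≤ (f' x - f' z₀) (z₀ - y)) ∧
      (∀ z ∈ C, (∀ y ∈ C, 0 ≤ (f' x - f' z) (z - y)) → z = z₀)))
    ∧
    -- (ii) ↔ (iii)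
    (((∀ y ∈ C, 0 ≤ (f' x - f' z₀) (z₀ - y)) ∧
      (∀ z ∈ C, (∀ y ∈ C, 0 ≤ (f' x - f' z) (z - y)) → z = z₀))
     ↔
     ((∀ y ∈ C,
        BregmanDistR f f' y z₀ + BregmanDistR f f' z₀ x ≤ BregmanDistR f f' y x) ∧
      (∀ z ∈ C, (∀ y ∈ C,
        BregmanDistR f f' y z + BregmanDistR f f' z x ≤ BregmanDistR f f' y x) → z = z₀))) :=
  stmt7_general f hnebot hconv f' hgrad x C hCconv hCsub z₀ hz₀
end

section
/- Let E be a real reflexive Banach space and let f, g : E → (−∞,+∞] be two proper convex functions such that there exists a point x₀ ∈ dom f ∩ dom g at which f is continuous. Then ∂(f+g)(x) = ∂f(x) + ∂g(x) for every x ∈ E. -/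
/-!
Moreau–Rockafellar by separation. If `ξ ∈ ∂(f + g)(x)`, then `f + g` lies above the affine
function `f x + g x + ξ (· - x)`, so the interior of the epigraph of `f` (nonempty, since `f` is
continuous at `x₀`) is disjoint from the convex set of points below
`f x + g x + ξ (· - x) - g`. Both sets meet the vertical line through `x₀`, so a separating
hyperplane is the graph of an affine function `η + σ` lying below `f`, with
`ξ - η + (f x + g x - ξ x - σ)` lying below `g`. Evaluating at `x` forces equality there, i.e.
`η ∈ ∂f(x)` and `ξ - η ∈ ∂g(x)`.
-/

open Pointwise Topology

def IsConvexEReal {E : Type*} [AddCommGroup E] [Module ℝ E] (φ : E → EReal) : Prop :=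
  ∀ x y : E, ∀ a b : ℝ, 0 ≤ a → 0 ≤ b → a + b = 1 →
    φ (a • x + b • y) ≤ (a : EReal) * φ x + (b : EReal) * φ y

def epigraph {E : Type*} (φ : E → EReal) : Set (E × ℝ) := {p | φ p.1 ≤ p.2}

section Convexity

variable {E : Type*} [AddCommGroup E] [Module ℝ E] {φ : E → EReal}

theorem IsConvexEReal.convex_setOf_le (hφ : IsConvexEReal φ) (L : E × ℝ →ᵃ[ℝ] ℝ) :
    Convex ℝ {p : E × ℝ | φ p.1 ≤ L p} := by
  intro p hp q hq a b ha hb hab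
  calc φ (a • p + b • q).1 = φ (a • p.1 + b • q.1) := rfl
    _ ≤ a * φ p.1 + b * φ q.1 := hφ _ _ a b ha hb hab
    _ ≤ a * L p + b * L q :=
      add_le_add (mul_le_mul_of_nonneg_left hp (EReal.coe_nonneg.mpr ha))
        (mul_le_mul_of_nonneg_left hq (EReal.coe_nonneg.mpr hb))
    _ = L (a • p + b • q) := by
      rw [Convex.combo_affine_apply hab, smul_eq_mul, smul_eq_mul]; norm_cast

theorem IsConvexEReal.convex_epigraph (hφ : IsConvexEReal φ) : Convex ℝ (epigraph φ) :=
  hφ.convex_setOf_le (LinearMap.snd ℝ E ℝ).toAffineMap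

end Convexity

section Subdifferential

variable {E : Type*} [TopologicalSpace E] [AddCommGroup E] [Module ℝ E]

def subdifferential (φ : E → EReal) (x : E) : Set (StrongDual ℝ E) :=
  {ξ | ∀ y, φ x + ((ξ (y - x) : ℝ) : EReal) ≤ φ y}

theorem add_subdifferential_subset (f g : E → EReal) (x : E) :
    subdifferential f x + subdifferential g x ⊆ subdifferential (f + g) x := by
  rintro _ ⟨ξ₁, hξ₁, ξ₂, hξ₂, rfl⟩ y
  calc (f + g) x + (((ξ₁ + ξ₂) (y - x) : ℝ) : EReal)
      = (f x + ((ξ₁ (y - x) : ℝ) : EReal)) + (g x + ((ξ₂ (y - x) : ℝ) : EReal)) := by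
        rw [Pi.add_apply, add_apply, EReal.coe_add]; abel
    _ ≤ (f + g) y := add_le_add (hξ₁ y) (hξ₂ y)

end Subdifferential

section Topology

variable {E : Type*} [TopologicalSpace E] {φ : E → EReal}

theorem lt_of_mem_interior_epigraph {p : E × ℝ} (hp : p ∈ interior (epigraph φ)) :
    φ p.1 < p.2 := by
  have hnear : ∀ᶠ t in 𝓝 p.2, (p.1, t) ∈ epigraph φ :=
    (continuous_const.prodMk continuous_id).continuousAt.preimage_mem_nhds
      (mem_interior_iff_mem_nhds.mp hp)
  obtain ⟨t, ht, hmem⟩ := hnear.exists_lt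
  exact hmem.trans_lt (EReal.coe_lt_coe_iff.mpr ht)

theorem mem_interior_epigraph_of_continuousAt {x : E} (hφ : ContinuousAt φ x) {t : ℝ}
    (ht : φ x < t) : (x, t) ∈ interior (epigraph φ) := by
  obtain ⟨s, hxs, hst⟩ := EReal.lt_iff_exists_real_btwn.mp ht
  rw [mem_interior_iff_mem_nhds]
  refine Filter.mem_of_superset (prod_mem_nhds (hφ.preimage_mem_nhds (Iio_mem_nhds hxs))
    (Ioi_mem_nhds (EReal.coe_lt_coe_iff.mp hst))) ?_
  rintro ⟨y, r⟩ ⟨hy, hr⟩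
  exact hy.le.trans (EReal.coe_le_coe_iff.mpr hr.le)

end Topology

section Separation

variable {E : Type*} [TopologicalSpace E] [AddCommGroup E] [Module ℝ E] [IsTopologicalAddGroup E]
  [ContinuousSMul ℝ E]

theorem exists_nonvertical_separation {A B : Set (E × ℝ)} (hA : Convex ℝ A)
    (hAo : IsOpen A) (hB : Convex ℝ B) (hAB : Disjoint A B) {x₀ : E} {t₁ r₀ : ℝ}
    (hAx₀ : ∀ t, t₁ ≤ t → (x₀, t) ∈ A) (hBx₀ : (x₀, r₀) ∈ B) :
    ∃ (η : E →L[ℝ] ℝ) (σ : ℝ), (∀ p ∈ A, η p.1 + σ < p.2) ∧ ∀ p ∈ B, p.2 ≤ η p.1 + σ := by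
  obtain ⟨φ, u, hφA, hφB⟩ := geometric_hahn_banach_open hA hAo hB hAB
  have hφ : ∀ p : E × ℝ, φ p = φ (p.1, 0) + p.2 * φ (0, 1) := by
    rintro ⟨y, r⟩
    rw [← smul_eq_mul, ← map_smul, ← map_add, Prod.smul_mk, smul_zero, smul_eq_mul, mul_one,
      Prod.mk_add_mk, add_zero, zero_add]
  -- Non-verticality: `A` contains the ray above `(x₀, t₁)` and `B` the point `(x₀, r₀)`.
  have hslope : φ (0, 1) < 0 := by
    have hlt := (hφA _ (hAx₀ (max t₁ (r₀ + 1)) (le_max_left _ _))).trans_le (hφB _ hBx₀)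
    rw [hφ (x₀, _), hφ (x₀, r₀)] at hlt
    by_contra! h
    nlinarith [le_max_right t₁ (r₀ + 1)]
  set μ := -φ (0, 1)
  have hμ : 0 < μ := neg_pos.mpr hslope
  refine ⟨μ⁻¹ • φ.comp (ContinuousLinearMap.inl ℝ E ℝ), -(μ⁻¹ * u), fun p hp => ?_, fun p hp => ?_⟩
  · have h := hφA p hp
    rw [hφ] at h
    simp only [smul_apply, ContinuousLinearMap.comp_apply,
      ContinuousLinearMap.inl_apply, smul_eq_mul]
    rw [← mul_neg, ← mul_add, inv_mul_lt_iff₀ hμ]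
    linarith
  · have h := hφB p hp
    rw [hφ] at h
    simp only [smul_apply, ContinuousLinearMap.comp_apply,
      ContinuousLinearMap.inl_apply, smul_eq_mul]
    rw [← mul_neg, ← mul_add, le_inv_mul_iff₀ hμ]
    linarith

theorem exists_affine_minorants_of_affine_le_add {f g : E → EReal} (hf : IsConvexEReal f)
    (hg : IsConvexEReal g) {x₀ : E} (hfx₀ : f x₀ ≠ ⊤) (hgx₀ : g x₀ ≠ ⊤)
    (hfc : ContinuousAt f x₀) (ℓ : E →L[ℝ] ℝ) (c : ℝ)
    (hle : ∀ y, ((ℓ y + c : ℝ) : EReal) ≤ f y + g y) :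
    ∃ (η : E →L[ℝ] ℝ) (σ : ℝ), ∀ y,
      ((η y + σ : ℝ) : EReal) ≤ f y ∧ (((ℓ - η) y + (c - σ) : ℝ) : EReal) ≤ g y := by
  set A := interior (epigraph f)
  set B := {p : E × ℝ | g p.1 ≤ ((ℓ p.1 + c - p.2 : ℝ) : EReal)}
  have hB : Convex ℝ B := by
    convert hg.convex_setOf_le ((ℓ.toLinearMap ∘ₗ LinearMap.fst ℝ E ℝ -
      LinearMap.snd ℝ E ℝ).toAffineMap + AffineMap.const ℝ (E × ℝ) c) using 5
    simp only [AffineMap.coe_add, Pi.add_apply, LinearMap.coe_toAffineMap, LinearMap.sub_apply,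
      LinearMap.coe_comp, Function.comp_apply, LinearMap.fst_apply, LinearMap.snd_apply,
      AffineMap.const_apply, ContinuousLinearMap.coe_coe]
    ring
  have hAB : Disjoint A B := by
    refine Set.disjoint_left.mpr fun ⟨y, r⟩ hA hB => (hle y).not_gt ?_
    calc f y + g y ≤ f y + ((ℓ y + c - r : ℝ) : EReal) := add_le_add le_rfl hB
      _ < r + ((ℓ y + c - r : ℝ) : EReal) :=
        EReal.add_lt_add_right_coe (lt_of_mem_interior_epigraph hA) _
      _ = ((ℓ y + c : ℝ) : EReal) := by norm_cast; ring
  obtain ⟨t₁, hft₁, -⟩ := EReal.lt_iff_exists_real_btwn.mp (lt_top_iff_ne_top.mpr hfx₀)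
  obtain ⟨s₀, hgs₀, -⟩ := EReal.lt_iff_exists_real_btwn.mp (lt_top_iff_ne_top.mpr hgx₀)
  have hAx₀ : ∀ t, t₁ ≤ t → (x₀, t) ∈ A := fun t ht =>
    mem_interior_epigraph_of_continuousAt hfc (hft₁.trans_le (EReal.coe_le_coe_iff.mpr ht))
  have hBmem : ∀ y (z : ℝ), g y ≤ z → (y, ℓ y + c - z) ∈ B := fun y z hz => by
    show g y ≤ ((ℓ y + c - (ℓ y + c - z) : ℝ) : EReal)
    rwa [sub_sub_cancel]
  obtain ⟨η, σ, hηA, hηB⟩ := exists_nonvertical_separation hf.convex_epigraph.interior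
    isOpen_interior hB hAB hAx₀ (hBmem x₀ s₀ hgs₀.le)
  have hηepi : ∀ p ∈ epigraph f, η p.1 + σ ≤ p.2 := by
    have hclosure : closure A = closure (epigraph f) :=
      hf.convex_epigraph.closure_interior_eq_closure_of_nonempty_interior ⟨_, hAx₀ t₁ le_rfl⟩
    intro p hp
    refine closure_minimal (t := {q : E × ℝ | η q.1 + σ ≤ q.2}) (fun q hq => (hηA q hq).le) ?_
      (hclosure ▸ subset_closure hp)
    exact isClosed_le (by fun_prop) continuous_snd
  refine ⟨η, σ, fun y => ⟨?_, ?_⟩⟩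
  · refine EReal.le_of_forall_lt_iff_le.mp fun z hz => EReal.coe_le_coe_iff.mpr ?_
    exact hηepi (y, z) hz.le
  · refine EReal.le_of_forall_lt_iff_le.mp fun z hz => EReal.coe_le_coe_iff.mpr ?_
    have h := hηB _ (hBmem y z hz.le)
    simp only [sub_apply] at h ⊢
    linarith

theorem subdifferential_add_subset {f g : E → EReal} (hf : IsConvexEReal f)
    (hg : IsConvexEReal g) {x₀ : E} (hfx₀ : f x₀ ≠ ⊤) (hgx₀ : g x₀ ≠ ⊤)
    (hfc : ContinuousAt f x₀) {x : E} (hfx : f x ≠ ⊥) (hgx : g x ≠ ⊥) :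
    subdifferential (f + g) x ⊆ subdifferential f x + subdifferential g x := by
  intro ξ hξ
  have hfgx : f x + g x ≠ ⊤ := fun htop => by
    have h := (hξ x₀).trans_lt (EReal.add_lt_top hfx₀ hgx₀)
    rw [Pi.add_apply, htop, EReal.top_add_coe] at h
    exact h.false
  obtain ⟨hfx', hgx'⟩ := (EReal.add_ne_top_iff_ne_top₂ hfx hgx).mp hfgx
  obtain ⟨a, ha⟩ : ∃ a : ℝ, f x = a := ⟨_, (EReal.coe_toReal hfx' hfx).symm⟩
  obtain ⟨b, hb⟩ : ∃ b : ℝ, g x = b := ⟨_, (EReal.coe_toReal hgx' hgx).symm⟩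
  obtain ⟨η, σ, hη⟩ := exists_affine_minorants_of_affine_le_add hf hg hfx₀ hgx₀ hfc
    ξ (a + b - ξ x) fun y => by
      have hy := hξ y
      rw [Pi.add_apply, Pi.add_apply, ha, hb, map_sub] at hy
      convert hy using 1; norm_cast; ring
  have hσ : σ = a - η x := by
    have hηx := hη x
    rw [ha, hb, EReal.coe_le_coe_iff, EReal.coe_le_coe_iff, sub_apply] at hηx
    linarith
  refine ⟨η, fun y => ?_, ξ - η, fun y => ?_, add_sub_cancel η ξ⟩
  · convert (hη y).1 using 1
    rw [ha, map_sub, hσ]; norm_cast; ring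
  · convert (hη y).2 using 1
    rw [hb, map_sub, hσ, sub_apply, sub_apply]; norm_cast; ring

end Separation

theorem stmt9_general {E : Type*} [NormedAddCommGroup E] [NormedSpace ℝ E]
    (f g : E → EReal)
    (hfnebot : ∀ x : E, f x ≠ ⊥) (hgnebot : ∀ x : E, g x ≠ ⊥)
    (hfconv : ∀ x y : E, ∀ a b : ℝ, 0 ≤ a → 0 ≤ b → a + b = 1 →
      f (a • x + b • y) ≤ (a : EReal) * f x + (b : EReal) * f y)
    (hgconv : ∀ x y : E, ∀ a b : ℝ, 0 ≤ a → 0 ≤ b → a + b = 1 →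
      g (a • x + b • y) ≤ (a : EReal) * g x + (b : EReal) * g y)
    (x₀ : E) (hx₀f : f x₀ ≠ ⊤) (hx₀g : g x₀ ≠ ⊤)
    (hfcont : ContinuousAt f x₀) :
    ∀ x : E,
      {ξ : StrongDual ℝ E | ∀ y : E,
          (f x + g x) + ((ξ (y - x) : ℝ) : EReal) ≤ f y + g y} =
      {ξ : StrongDual ℝ E | ∀ y : E, f x + ((ξ (y - x) : ℝ) : EReal) ≤ f y} +
      {ξ : StrongDual ℝ E | ∀ y : E, g x + ((ξ (y - x) : ℝ) : EReal) ≤ g y} := fun x =>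
  (subdifferential_add_subset hfconv hgconv hx₀f hx₀g hfcont (hfnebot x) (hgnebot x)).antisymm
    (add_subdifferential_subset f g x)

/-- Let `E` be a real reflexive Banach space and `f, g : E → (−∞,+∞]` two
proper convex functions such that there is a point `x₀ ∈ dom f ∩ dom g` at which `f` is
continuous.  Then `∂(f+g)(x) = ∂f(x) + ∂g(x)` for every `x ∈ E` (Minkowski sum). -/
theorem stmt9 {E : Type*} [NormedAddCommGroup E] [NormedSpace ℝ E] [CompleteSpace E]
    (hrefl : Function.Surjective (NormedSpace.inclusionInDoubleDual ℝ E))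
    (f g : E → EReal)
    (hfnebot : ∀ x : E, f x ≠ ⊥) (hgnebot : ∀ x : E, g x ≠ ⊥)
    (hfproper : ∃ x : E, f x ≠ ⊤) (hgproper : ∃ x : E, g x ≠ ⊤)
    (hfconv : ∀ x y : E, ∀ a b : ℝ, 0 ≤ a → 0 ≤ b → a + b = 1 →
      f (a • x + b • y) ≤ (a : EReal) * f x + (b : EReal) * f y)
    (hgconv : ∀ x y : E, ∀ a b : ℝ, 0 ≤ a → 0 ≤ b → a + b = 1 →
      g (a • x + b • y) ≤ (a : EReal) * g x + (b : EReal) * g y)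
    (x₀ : E) (hx₀f : f x₀ ≠ ⊤) (hx₀g : g x₀ ≠ ⊤)
    (hfcont : ContinuousAt f x₀) :
    ∀ x : E,
      {ξ : StrongDual ℝ E | ∀ y : E,
          (f x + g x) + ((ξ (y - x) : ℝ) : EReal) ≤ f y + g y} =
      {ξ : StrongDual ℝ E | ∀ y : E, f x + ((ξ (y - x) : ℝ) : EReal) ≤ f y} +
      {ξ : StrongDual ℝ E | ∀ y : E, g x + ((ξ (y - x) : ℝ) : EReal) ≤ g y} :=
  stmt9_general f g hfnebot hgnebot hfconv hgconv x₀ hx₀f hx₀g hfcont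
end

section
/- Let E be a real reflexive Banach space, C a nonempty closed convex subset of E, and let h : C × C → (−∞,+∞] be a bifunction with h(x,x) = 0 for all x ∈ C satisfying: (A1) h is pseudomonotone; (A3) h is weakly continuous on C × C; (A4) h(x,·) is convex, lower semicontinuous and subdifferentiable on C for every x ∈ C; (A5) for each x, y, z ∈ C, limsup_{t↓0} h(tx + (1−t)y, z) ≤ h(y,z). Then EP(h) = DEP(h), and EP(h) is closed and convex. -/
/-!
Pseudomonotonicity gives `EP(h) ⊆ DEP(h)` at once. Conversely, for `z ∈ DEP(h)` and `y ∈ C` put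
`xₜ = t y + (1 - t) z`; convexity of `h(xₜ, ·)` and `h(xₜ, xₜ) = 0` give
`0 ≤ t h(xₜ, y) + (1 - t) h(xₜ, z) ≤ t h(xₜ, y)`, so `h(xₜ, y) ≥ 0` for `t ∈ (0, 1)`, and the
upper hemicontinuity (A5) lets `t ↓ 0` to reach `h(z, y) ≥ 0` (Minty's lemma).
Finally `DEP(h)` is an intersection of sublevel sets of the convex lower semicontinuous
functions `h(x, ·)`, hence closed and convex.
-/

open Filter Topology Set

def ConvexOnEReal {E : Type*} [AddCommGroup E] [Module ℝ E] (C : Set E) (f : E → EReal) :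
    Prop :=
  ∀ u ∈ C, ∀ v ∈ C, ∀ a b : ℝ, 0 ≤ a → 0 ≤ b → a + b = 1 →
    f (a • u + b • v) ≤ (a : EReal) * f u + (b : EReal) * f v

def equilibriumSet {E : Type*} (C : Set E) (h : E → E → EReal) : Set E :=
  {x ∈ C | ∀ y ∈ C, 0 ≤ h x y}

def dualEquilibriumSet {E : Type*} (C : Set E) (h : E → E → EReal) : Set E :=
  {y ∈ C | ∀ x ∈ C, h x y ≤ 0}

theorem LowerSemicontinuousOn.isClosed_sep_le {α γ : Type*} [TopologicalSpace α]
    [LinearOrder γ] {s : Set α} {f : α → γ} (hs : IsClosed s) (hf : LowerSemicontinuousOn f s)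
    (b : γ) : IsClosed {x ∈ s | f x ≤ b} := by
  obtain ⟨v, hv, hsv⟩ := lowerSemicontinuousOn_iff_preimage_Iic.mp hf b
  change IsClosed (s ∩ f ⁻¹' Iic b)
  rw [hsv]
  exact hs.inter hv

section

variable {E : Type*} {C : Set E} {h : E → E → EReal}

theorem dualEquilibriumSet_eq_inter_biInter :
    dualEquilibriumSet C h = C ∩ ⋂ x ∈ C, {y ∈ C | h x y ≤ 0} := by
  ext y
  simp only [dualEquilibriumSet, mem_ofPred_eq, mem_inter_iff, mem_iInter]
  exact ⟨fun ⟨hy, hxy⟩ => ⟨hy, fun x hx => ⟨hy, hxy x hx⟩⟩,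
    fun ⟨hy, hxy⟩ => ⟨hy, fun x hx => (hxy x hx).2⟩⟩

theorem equilibriumSet_subset_dualEquilibriumSet
    (hpseudo : ∀ x ∈ C, ∀ y ∈ C, 0 ≤ h x y → h y x ≤ 0) :
    equilibriumSet C h ⊆ dualEquilibriumSet C h :=
  fun z ⟨hz, hzy⟩ => ⟨hz, fun x hx => hpseudo z hz x hx (hzy x hx)⟩

theorem isClosed_dualEquilibriumSet [TopologicalSpace E] (hC : IsClosed C)
    (hlsc : ∀ x ∈ C, LowerSemicontinuousOn (h x) C) : IsClosed (dualEquilibriumSet C h) := by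
  rw [dualEquilibriumSet_eq_inter_biInter]
  exact hC.inter (isClosed_biInter fun x hx => (hlsc x hx).isClosed_sep_le hC 0)

end

section

variable {E : Type*} [AddCommGroup E] [Module ℝ E] {C : Set E}

theorem ConvexOnEReal.convex_sep_nonpos {f : E → EReal} (hC : Convex ℝ C)
    (hf : ConvexOnEReal C f) : Convex ℝ {y ∈ C | f y ≤ 0} := by
  rintro u ⟨hu, hfu⟩ v ⟨hv, hfv⟩ a b ha hb hab
  refine ⟨hC hu hv ha hb hab, ?_⟩
  calc f (a • u + b • v) ≤ (a : EReal) * f u + (b : EReal) * f v := hf u hu v hv a b ha hb hab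
    _ ≤ 0 + 0 := add_le_add
        (mul_nonpos_of_nonneg_of_nonpos (mod_cast ha) hfu)
        (mul_nonpos_of_nonneg_of_nonpos (mod_cast hb) hfv)
    _ = 0 := add_zero 0

variable {h : E → E → EReal}

theorem nonneg_at_segment_of_mem_dualEquilibriumSet (hC : Convex ℝ C)
    (hdiag : ∀ x ∈ C, h x x = 0) (hconv : ∀ x ∈ C, ConvexOnEReal C (h x))
    {z : E} (hz : z ∈ dualEquilibriumSet C h) {y : E} (hy : y ∈ C) {t : ℝ} (ht : t ∈ Ioo 0 1) :
    0 ≤ h (t • y + (1 - t) • z) y := by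
  set x := t • y + (1 - t) • z
  have hx : x ∈ C := hC hy hz.1 ht.1.le (by linarith [ht.2]) (by ring)
  have hmul : 0 ≤ (t : EReal) * h x y :=
    calc (0 : EReal) = h x x := (hdiag x hx).symm
      _ ≤ (t : EReal) * h x y + ((1 - t : ℝ) : EReal) * h x z :=
        hconv x hx y hy z hz.1 t (1 - t) ht.1.le (by linarith [ht.2]) (by ring)
      _ ≤ (t : EReal) * h x y + 0 := by
        gcongr
        exact mul_nonpos_of_nonneg_of_nonpos (mod_cast (by linarith [ht.2])) (hz.2 x hx)
      _ = (t : EReal) * h x y := add_zero _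
  rcases EReal.mul_nonneg_iff.mp hmul with ⟨-, hpos⟩ | ⟨hneg, -⟩
  · exact hpos
  · exact absurd (EReal.coe_nonpos.mp hneg) (not_le.mpr ht.1)

theorem dualEquilibriumSet_subset_equilibriumSet (hC : Convex ℝ C)
    (hdiag : ∀ x ∈ C, h x x = 0) (hconv : ∀ x ∈ C, ConvexOnEReal C (h x))
    (hhemi : ∀ x ∈ C, ∀ y ∈ C, ∀ z ∈ C,
      limsup (fun t : ℝ => h (t • x + (1 - t) • y) z) (𝓝[>] 0) ≤ h y z) :
    dualEquilibriumSet C h ⊆ equilibriumSet C h := by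
  refine fun z hz => ⟨hz.1, fun y hy => ?_⟩
  have hev : ∀ᶠ t in 𝓝[>] (0 : ℝ), 0 ≤ h (t • y + (1 - t) • z) y := by
    filter_upwards [Ioo_mem_nhdsGT (zero_lt_one' ℝ)] with t ht
    exact nonneg_at_segment_of_mem_dualEquilibriumSet hC hdiag hconv hz hy ht
  exact (le_limsup_of_frequently_le hev.frequently).trans (hhemi y hy z hz.1 y hy)

theorem convex_dualEquilibriumSet (hC : Convex ℝ C) (hconv : ∀ x ∈ C, ConvexOnEReal C (h x)) :
    Convex ℝ (dualEquilibriumSet C h) := by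
  rw [dualEquilibriumSet_eq_inter_biInter]
  exact hC.inter (convex_iInter₂ fun x hx => (hconv x hx).convex_sep_nonpos hC)

end

theorem stmt10_general {E : Type*} [NormedAddCommGroup E] [NormedSpace ℝ E]
    (C : Set E) (hCcl : IsClosed C) (hCconv : Convex ℝ C)
    (h : E → E → EReal)
    (hdiag : ∀ x ∈ C, h x x = 0)
    -- (A1) pseudomonotone
    (hA1 : ∀ x ∈ C, ∀ y ∈ C, 0 ≤ h x y → h y x ≤ 0)
    -- (A4) `h(x,·)` convex, lower semicontinuous and subdifferentiable on C
    (hA4conv : ∀ x ∈ C, ∀ u ∈ C, ∀ v ∈ C, ∀ a b : ℝ, 0 ≤ a → 0 ≤ b → a + b = 1 →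
      h x (a • u + b • v) ≤ (a : EReal) * h x u + (b : EReal) * h x v)
    (hA4lsc : ∀ x ∈ C, LowerSemicontinuousOn (h x) C)
    -- (A5)
    (hA5 : ∀ x ∈ C, ∀ y ∈ C, ∀ z ∈ C,
      Filter.limsup (fun t : ℝ => h (t • x + (1 - t) • y) z) (𝓝[>] (0 : ℝ)) ≤ h y z) :
    {x ∈ C | ∀ y ∈ C, 0 ≤ h x y} = {y ∈ C | ∀ x ∈ C, h x y ≤ 0} ∧
    IsClosed {x ∈ C | ∀ y ∈ C, 0 ≤ h x y} ∧
    Convex ℝ {x ∈ C | ∀ y ∈ C, 0 ≤ h x y} := by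
  have hEP : equilibriumSet C h = dualEquilibriumSet C h :=
    (equilibriumSet_subset_dualEquilibriumSet hA1).antisymm
      (dualEquilibriumSet_subset_equilibriumSet hCconv hdiag hA4conv hA5)
  refine ⟨hEP, ?_, ?_⟩
  · change IsClosed (equilibriumSet C h)
    exact hEP ▸ isClosed_dualEquilibriumSet hCcl hA4lsc
  · change Convex ℝ (equilibriumSet C h)
    exact hEP ▸ convex_dualEquilibriumSet hCconv hA4conv

/-- Let `E` be a real reflexive Banach space, `C ⊆ E` nonempty closed convex,
and `h : C × C → (−∞,+∞]` a bifunction with `h(x,x) = 0` on `C` satisfying (A1)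
pseudomonotonicity, (A3) weak continuity on `C × C`, (A4) convexity, lower semicontinuity and
subdifferentiability of `h(x,·)` on `C`, and (A5) `limsup_{t↓0} h(tx+(1−t)y, z) ≤ h(y,z)`.
Then `EP(h) = DEP(h)` and `EP(h)` is closed and convex. -/
theorem stmt10 {E : Type*} [NormedAddCommGroup E] [NormedSpace ℝ E] [CompleteSpace E]
    (hrefl : Function.Surjective (NormedSpace.inclusionInDoubleDual ℝ E))
    (C : Set E) (hCne : C.Nonempty) (hCcl : IsClosed C) (hCconv : Convex ℝ C)
    (h : E → E → EReal)
    (hnebot : ∀ x ∈ C, ∀ y ∈ C, h x y ≠ ⊥)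
    (hdiag : ∀ x ∈ C, h x x = 0)
    -- (A1) pseudomonotone
    (hA1 : ∀ x ∈ C, ∀ y ∈ C, 0 ≤ h x y → h y x ≤ 0)
    -- (A3) weakly continuous on C × C
    (hA3 : ∀ (xs ys : ℕ → E) (x y : E), (∀ n, xs n ∈ C) → (∀ n, ys n ∈ C) →
      x ∈ C → y ∈ C →
      (∀ ξ : StrongDual ℝ E, Tendsto (fun n => ξ (xs n)) atTop (𝓝 (ξ x))) →
      (∀ ξ : StrongDual ℝ E, Tendsto (fun n => ξ (ys n)) atTop (𝓝 (ξ y))) →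
      Tendsto (fun n => h (xs n) (ys n)) atTop (𝓝 (h x y)))
    -- (A4) `h(x,·)` convex, lower semicontinuous and subdifferentiable on C
    (hA4conv : ∀ x ∈ C, ∀ u ∈ C, ∀ v ∈ C, ∀ a b : ℝ, 0 ≤ a → 0 ≤ b → a + b = 1 →
      h x (a • u + b • v) ≤ (a : EReal) * h x u + (b : EReal) * h x v)
    (hA4lsc : ∀ x ∈ C, LowerSemicontinuousOn (h x) C)
    (hA4sub : ∀ x ∈ C, ∀ y ∈ C,
      Set.Nonempty {ξ : StrongDual ℝ E | ∀ z ∈ C,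
        h x y + ((ξ (z - y) : ℝ) : EReal) ≤ h x z})
    -- (A5)
    (hA5 : ∀ x ∈ C, ∀ y ∈ C, ∀ z ∈ C,
      Filter.limsup (fun t : ℝ => h (t • x + (1 - t) • y) z) (𝓝[>] (0 : ℝ)) ≤ h y z) :
    {x ∈ C | ∀ y ∈ C, 0 ≤ h x y} = {y ∈ C | ∀ x ∈ C, h x y ≤ 0} ∧
    IsClosed {x ∈ C | ∀ y ∈ C, 0 ≤ h x y} ∧
    Convex ℝ {x ∈ C | ∀ y ∈ C, 0 ≤ h x y} :=
  stmt10_general C hCcl hCconv h hdiag hA1 hA4conv hA4lsc hA5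
end

section
/- Let C be a nonempty closed convex subset of a real reflexive Banach space E and let f : E → ℝ be a Legendre and strongly coercive function. Let h : C × C → ℝ be a bifunction with h(x,x) = 0 for all x ∈ C which is pseudomonotone, Bregman–Lipschitz-type continuous with coefficients c₁, c₂ with respect to f, weakly continuous on C × C, and such that h(x,·) is convex, lower semicontinuous and subdifferentiable on C for every x ∈ C. For arbitrary sequences {x_n} ⊆ C and {α_n} ⊆ (0,+∞), define t_n = argmin{α_n h(x_n, u) + D_f(u, x_n) : u ∈ C} and v_n = argmin{α_n h(t_n, u) + D_f(u, x_n) : u ∈ C}. Then for all x* ∈ EP(h): D_f(x*, v_n) ≤ D_f(x*, x_n) − (1 − α_n c₁) D_f(t_n, x_n) − (1 − α_n c₂) D_f(v_n, t_n). -/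
open Filter Topology Set Bornology

/-!
The minimality of `t n` and `v n`, through the first-order optimality condition and the
three-point identity for `D_f`, gives
`D(v,t) + D(t,x) - D(v,x) ≤ α (h(x,v) - h(x,t))` and
`D(x*,v) + D(v,x) - D(x*,x) ≤ α (h(t,x*) - h(t,v))`.
Pseudomonotonicity at `x* ∈ EP(h)` gives `h(t,x*) ≤ 0`, and the Bregman–Lipschitz condition
bounds `h(x,v) - h(x,t) - h(t,v)` by `c₁ D(t,x) + c₂ D(v,t)`; adding up yields the claim.
-/

lemma ConvexOn.sub_le_of_isMinOn_add {E : Type*} [AddCommGroup E] [Module ℝ E] {C : Set E}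
    {g φ : E → ℝ} (hg : ConvexOn ℝ C g) {m u : E} (hm : m ∈ C) (hu : u ∈ C)
    (hmin : IsMinOn (g + φ) C m) {φ' : ℝ}
    (hφ : Tendsto (fun s : ℝ => (φ (m + s • (u - m)) - φ m) / s) (𝓝[>] 0) (𝓝 φ')) :
    g m - g u ≤ φ' := by
  refine ge_of_tendsto hφ (eventually_of_mem (Ioc_mem_nhdsGT one_pos) fun s ⟨hs₀, hs₁⟩ => ?_)
  have hseg : m + s • (u - m) = (1 - s) • m + s • u := by module
  have hmem : m + s • (u - m) ∈ C := hg.1.add_smul_sub_mem hm hu ⟨hs₀.le, hs₁⟩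
  have hconv : g (m + s • (u - m)) ≤ (1 - s) * g m + s * g u := by
    simpa only [hseg, smul_eq_mul] using hg.2 hm hu (by linarith) hs₀.le (by ring)
  have hle : g m + φ m ≤ g (m + s • (u - m)) + φ (m + s • (u - m)) := hmin hmem
  rw [le_div_iff₀ hs₀]
  linarith

lemma tendsto_bregmanDist_slope {E : Type*} [NormedAddCommGroup E] [NormedSpace ℝ E]
    {f : E → ℝ} {f' : E → StrongDual ℝ E} {m d : E}
    (hf : Tendsto (fun s : ℝ => (f (m + s • d) - f m) / s) (𝓝[>] 0) (𝓝 (f' m d))) (p : E) :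
    Tendsto (fun s : ℝ => (BregmanDist f f' (m + s • d) p - BregmanDist f f' m p) / s)
      (𝓝[>] 0) (𝓝 (f' m d - f' p d)) := by
  refine (hf.sub_const (f' p d)).congr' (eventually_nhdsWithin_of_forall fun s hs => ?_)
  have hs : s ≠ 0 := ne_of_gt hs
  simp only [BregmanDist, show m + s • d - p = (m - p) + s • d by abel, map_add, map_smul,
    smul_eq_mul]
  field_simp
  ring

lemma bregmanDist_three_point {E : Type*} [NormedAddCommGroup E] [NormedSpace ℝ E]
    (f : E → ℝ) (f' : E → StrongDual ℝ E) (u v x : E) :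
    BregmanDist f f' u v + BregmanDist f f' v x - BregmanDist f f' u x =
      f' x (u - v) - f' v (u - v) := by
  simp only [BregmanDist, show u - x = (u - v) + (v - x) by abel, map_add]
  ring

lemma bregmanDist_three_point_le_of_isMinOn {E : Type*} [NormedAddCommGroup E] [NormedSpace ℝ E]
    {C : Set E} {f : E → ℝ} {f' : E → StrongDual ℝ E}
    {g : E → ℝ} (hg : ConvexOn ℝ C g) {a : ℝ} (ha : 0 ≤ a) {p m u : E} (hm : m ∈ C) (hu : u ∈ C)
    (hf : Tendsto (fun s : ℝ => (f (m + s • (u - m)) - f m) / s) (𝓝[>] 0) (𝓝 (f' m (u - m))))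
    (hmin : IsMinOn (fun w => a * g w + BregmanDist f f' w p) C m) :
    BregmanDist f f' u m + BregmanDist f f' m p - BregmanDist f f' u p ≤ a * (g u - g m) := by
  have hopt := (hg.smul ha).sub_le_of_isMinOn_add hm hu hmin (tendsto_bregmanDist_slope hf p)
  rw [bregmanDist_three_point]
  simp only [smul_eq_mul] at hopt
  linarith

theorem stmt12_general {E : Type*} [NormedAddCommGroup E] [NormedSpace ℝ E]
    (C : Set E) (f : E → ℝ) (f' : E → StrongDual ℝ E)
    (hgrad : ∀ x y : E,
      Tendsto (fun t : ℝ => (f (x + t • y) - f x) / t) (𝓝[>] (0 : ℝ)) (𝓝 (f' x y)))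
    -- the bifunction `h`
    (h : E → E → ℝ)
    (hpseudo : ∀ x ∈ C, ∀ y ∈ C, 0 ≤ h x y → h y x ≤ 0)
    (c₁ c₂ : ℝ)
    (hBLip : ∀ x ∈ C, ∀ y ∈ C, ∀ z ∈ C,
      h x z - c₁ * BregmanDist f f' y x - c₂ * BregmanDist f f' z y ≤ h x y + h y z)
    (hconvh : ∀ x ∈ C, ConvexOn ℝ C (h x))
    -- the sequences
    (x : ℕ → E) (hx : ∀ n, x n ∈ C)
    (α : ℕ → ℝ) (hα : ∀ n, 0 < α n)
    (t v : ℕ → E)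
    (ht : ∀ n, t n ∈ C ∧ ∀ u ∈ C,
      α n * h (x n) (t n) + BregmanDist f f' (t n) (x n) ≤
      α n * h (x n) u + BregmanDist f f' u (x n))
    (hv : ∀ n, v n ∈ C ∧ ∀ u ∈ C,
      α n * h (t n) (v n) + BregmanDist f f' (v n) (x n) ≤
      α n * h (t n) u + BregmanDist f f' u (x n)) :
    ∀ xstar : E, xstar ∈ C → (∀ y ∈ C, 0 ≤ h xstar y) → ∀ n : ℕ,
      BregmanDist f f' xstar (v n) ≤
        BregmanDist f f' xstar (x n)
          - (1 - α n * c₁) * BregmanDist f f' (t n) (x n)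
          - (1 - α n * c₂) * BregmanDist f f' (v n) (t n) := by
  intro xstar hxstar hEP n
  obtain ⟨htC, htmin⟩ := ht n
  obtain ⟨hvC, hvmin⟩ := hv n
  have hαn := (hα n).le
  have hest_t := bregmanDist_three_point_le_of_isMinOn (hconvh (x n) (hx n)) hαn htC hvC
    (hgrad _ _) (isMinOn_iff.mpr htmin)
  have hest_v := bregmanDist_three_point_le_of_isMinOn (hconvh (t n) htC) hαn hvC hxstar
    (hgrad _ _) (isMinOn_iff.mpr hvmin)
  have hsign : α n * h (t n) xstar ≤ 0 :=
    mul_nonpos_of_nonneg_of_nonpos hαn (hpseudo xstar hxstar (t n) htC (hEP (t n) htC))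
  have hlip := mul_le_mul_of_nonneg_left (hBLip (x n) (hx n) (t n) htC (v n) hvC) hαn
  linarith

/-- Let `C` be a nonempty closed convex subset of a real reflexive Banach
space `E` and `f : E → ℝ` a Legendre and strongly coercive function.  Let `h : C × C → ℝ` be a
bifunction with `h(x,x) = 0` which is pseudomonotone, Bregman–Lipschitz-type continuous with
coefficients `c₁, c₂` w.r.t. `f`, weakly continuous on `C × C`, and such that `h(x,·)` is
convex, lower semicontinuous and subdifferentiable on `C`.  For sequences `{x_n} ⊆ C` and
`{α_n} ⊆ (0,∞)`, let `t_n = argmin {α_n h(x_n,u) + D_f(u,x_n) : u ∈ C}` and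
`v_n = argmin {α_n h(t_n,u) + D_f(u,x_n) : u ∈ C}`.  Then for all `x* ∈ EP(h)`,
`D_f(x*,v_n) ≤ D_f(x*,x_n) − (1 − α_n c₁) D_f(t_n,x_n) − (1 − α_n c₂) D_f(v_n,t_n)`. -/
theorem stmt12 {E : Type*} [NormedAddCommGroup E] [NormedSpace ℝ E] [CompleteSpace E]
    (hrefl : Function.Surjective (NormedSpace.inclusionInDoubleDual ℝ E))
    (C : Set E) (hCne : C.Nonempty) (hCcl : IsClosed C) (hCconv : Convex ℝ C)
    (f : E → ℝ) (hconv : ConvexOn ℝ Set.univ f)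
    (f' : E → StrongDual ℝ E)
    (hgrad : ∀ x y : E,
      Tendsto (fun t : ℝ => (f (x + t • y) - f x) / t) (𝓝[>] (0 : ℝ)) (𝓝 (f' x y)))
    -- the Fenchel conjugate of `f`, and the Legendre conditions (L1), (L2)
    (fstar : StrongDual ℝ E → EReal)
    (hfstar : ∀ ξ : StrongDual ℝ E, fstar ξ = ⨆ x : E, ((ξ x - f x : ℝ) : EReal))
    (hL1 : (interior (Set.univ : Set E)).Nonempty ∧
      ∀ x : E, Set.Subsingleton
        {ξ : StrongDual ℝ E | ∀ y : E, f x + ξ (y - x) ≤ f y})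
    (hL2 : (interior {ξ : StrongDual ℝ E | fstar ξ ≠ ⊤}).Nonempty ∧
      ∀ ξ : StrongDual ℝ E, Set.Subsingleton
        {Λ : StrongDual ℝ (StrongDual ℝ E) |
          ∀ η : StrongDual ℝ E, fstar ξ + ((Λ (η - ξ) : ℝ) : EReal) ≤ fstar η})
    -- strong coercivity of `f`
    (hcoercive : ∀ M : ℝ, ∃ R : ℝ, ∀ x : E, R ≤ ‖x‖ → M ≤ f x / ‖x‖)
    -- the bifunction `h`
    (h : E → E → ℝ)
    (hdiag : ∀ x ∈ C, h x x = 0)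
    (hpseudo : ∀ x ∈ C, ∀ y ∈ C, 0 ≤ h x y → h y x ≤ 0)
    (c₁ c₂ : ℝ) (hc₁ : 0 < c₁) (hc₂ : 0 < c₂)
    (hBLip : ∀ x ∈ C, ∀ y ∈ C, ∀ z ∈ C,
      h x z - c₁ * BregmanDist f f' y x - c₂ * BregmanDist f f' z y ≤ h x y + h y z)
    (hweakcont : ∀ (xs ys : ℕ → E) (x y : E), (∀ n, xs n ∈ C) → (∀ n, ys n ∈ C) →
      x ∈ C → y ∈ C →
      (∀ ξ : StrongDual ℝ E, Tendsto (fun n => ξ (xs n)) atTop (𝓝 (ξ x))) →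
      (∀ ξ : StrongDual ℝ E, Tendsto (fun n => ξ (ys n)) atTop (𝓝 (ξ y))) →
      Tendsto (fun n => h (xs n) (ys n)) atTop (𝓝 (h x y)))
    (hconvh : ∀ x ∈ C, ConvexOn ℝ C (h x))
    (hlsch : ∀ x ∈ C, LowerSemicontinuousOn (h x) C)
    (hsubh : ∀ x ∈ C, ∀ y ∈ C,
      Set.Nonempty {ξ : StrongDual ℝ E | ∀ z ∈ C, h x y + ξ (z - y) ≤ h x z})
    -- the sequences
    (x : ℕ → E) (hx : ∀ n, x n ∈ C)
    (α : ℕ → ℝ) (hα : ∀ n, 0 < α n)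
    (t v : ℕ → E)
    (ht : ∀ n, t n ∈ C ∧ ∀ u ∈ C,
      α n * h (x n) (t n) + BregmanDist f f' (t n) (x n) ≤
      α n * h (x n) u + BregmanDist f f' u (x n))
    (hv : ∀ n, v n ∈ C ∧ ∀ u ∈ C,
      α n * h (t n) (v n) + BregmanDist f f' (v n) (x n) ≤
      α n * h (t n) u + BregmanDist f f' u (x n)) :
    ∀ xstar : E, xstar ∈ C → (∀ y ∈ C, 0 ≤ h xstar y) → ∀ n : ℕ,
      BregmanDist f f' xstar (v n) ≤
        BregmanDist f f' xstar (x n)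
          - (1 - α n * c₁) * BregmanDist f f' (t n) (x n)
          - (1 - α n * c₂) * BregmanDist f f' (v n) (t n) :=
  stmt12_general C f f' hgrad h hpseudo c₁ c₂ hBLip hconvh x hx α hα t v ht hv
end

section
/- Let E be a real reflexive Banach space, let f : E → ℝ be a Gâteaux differentiable convex function, and let A : E → 2^{E*} be a maximal monotone operator such that A⁻¹0 ≠ ∅. Then for all r > 0, q ∈ A⁻¹0 and x ∈ E, D_f(q, x) ≥ D_f(q, Res^f_{rA}(x)) + D_f(Res^f_{rA}(x), x), where Res^f_{rA}(x) = (∇f + rA)⁻¹(∇f(x)) is the resolvent of rA with respect to f. -/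
open Filter Topology Set Bornology

/-- A multi-valued operator `A : E → 2^{E*}` is monotone. -/
def IsMonotoneOp {E : Type*} [NormedAddCommGroup E] [NormedSpace ℝ E]
    (A : E → Set (StrongDual ℝ E)) : Prop :=
  ∀ x y : E, ∀ u ∈ A x, ∀ v ∈ A y, 0 ≤ (u - v) (x - y)

/-- A monotone operator is maximal monotone if its graph is not properly contained in the
graph of any monotone operator on `E`. -/
def IsMaximalMonotoneOp {E : Type*} [NormedAddCommGroup E] [NormedSpace ℝ E]
    (A : E → Set (StrongDual ℝ E)) : Prop :=
  IsMonotoneOp A ∧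
  ∀ B : E → Set (StrongDual ℝ E), IsMonotoneOp B → (∀ x, A x ⊆ B x) → ∀ x, B x ⊆ A x

/-! The three-point identity reduces the inequality to `(∇f(x) − ∇f(z))(q − z) ≤ 0` for
`z = Res^f_{rA}(x)`. By the resolvent equation `∇f(x) − ∇f(z) = r ξ` with `ξ ∈ A z`, and since
`0 ∈ A q`, monotonicity of `A` gives `ξ (z − q) ≥ 0`. -/

theorem bregmanDist_add_bregmanDist {E : Type*} [NormedAddCommGroup E] [NormedSpace ℝ E]
    (f : E → ℝ) (f' : E → StrongDual ℝ E) (q z x : E) :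
    BregmanDist f f' q z + BregmanDist f f' z x =
      BregmanDist f f' q x + (f' x - f' z) (q - z) := by
  have hsplit : q - x = (q - z) + (z - x) := by abel
  simp only [BregmanDist, sub_apply, hsplit, map_add]
  ring

theorem stmt16_general {E : Type*} [NormedAddCommGroup E] [NormedSpace ℝ E]
    (f : E → ℝ)
    (f' : E → StrongDual ℝ E)
    (A : E → Set (StrongDual ℝ E))
    (hA : IsMaximalMonotoneOp A)
    -- the resolvent `Res^f_{rA}` of `rA` with respect to `f`
    (Res : ℝ → E → E)
    (hRes : ∀ r : ℝ, 0 < r → ∀ x : E,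
      ∃ ξ ∈ A (Res r x), f' x = f' (Res r x) + r • ξ) :
    ∀ r : ℝ, 0 < r → ∀ q : E, (0 : StrongDual ℝ E) ∈ A q → ∀ x : E,
      BregmanDist f f' q (Res r x) + BregmanDist f f' (Res r x) x ≤
        BregmanDist f f' q x := by
  intro r hr q hq x
  obtain ⟨ξ, hξ, hres⟩ := hRes r hr x
  have hmono : 0 ≤ ξ (Res r x - q) := by simpa using hA.1 _ _ ξ hξ 0 hq
  have hpair : (f' x - f' (Res r x)) (q - Res r x) = -(r * ξ (Res r x - q)) := by
    rw [hres, add_sub_cancel_left, ← neg_sub (Res r x) q, map_neg, smul_apply, smul_eq_mul]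
  rw [bregmanDist_add_bregmanDist, hpair]
  linarith [mul_nonneg hr.le hmono]

/-- Let `E` be a real reflexive Banach space, `f : E → ℝ` a Gâteaux
differentiable convex function and `A : E → 2^{E*}` a maximal monotone operator with
`A⁻¹0 ≠ ∅`.  Then for all `r > 0`, `q ∈ A⁻¹0` and `x ∈ E`,
`D_f(q,x) ≥ D_f(q, Res^f_{rA}(x)) + D_f(Res^f_{rA}(x), x)`, where the resolvent satisfies
`∇f(x) ∈ ∇f(Res^f_{rA}(x)) + r A(Res^f_{rA}(x))`. -/
theorem stmt16 {E : Type*} [NormedAddCommGroup E] [NormedSpace ℝ E] [CompleteSpace E]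
    (hrefl : Function.Surjective (NormedSpace.inclusionInDoubleDual ℝ E))
    (f : E → ℝ) (hconv : ConvexOn ℝ Set.univ f)
    (f' : E → StrongDual ℝ E)
    (hgrad : ∀ x y : E,
      Tendsto (fun t : ℝ => (f (x + t • y) - f x) / t) (𝓝[>] (0 : ℝ)) (𝓝 (f' x y)))
    (A : E → Set (StrongDual ℝ E))
    (hA : IsMaximalMonotoneOp A)
    (hA0 : ∃ q : E, (0 : StrongDual ℝ E) ∈ A q)
    -- the resolvent `Res^f_{rA}` of `rA` with respect to `f`
    (Res : ℝ → E → E)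
    (hRes : ∀ r : ℝ, 0 < r → ∀ x : E,
      ∃ ξ ∈ A (Res r x), f' x = f' (Res r x) + r • ξ) :
    ∀ r : ℝ, 0 < r → ∀ q : E, (0 : StrongDual ℝ E) ∈ A q → ∀ x : E,
      BregmanDist f f' q (Res r x) + BregmanDist f f' (Res r x) x ≤
        BregmanDist f f' q x :=
  stmt16_general f f' A hA Res hRes
end
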